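/- arXiv:1505.06710 — 6 statements merged into one kernel-verified Lean document; each statement's English description precedes it below -/
import Mathlib

section
/- For every lattice path family L = L[S_A, S_B] on ground set {1,…,m} and every pair of distinct elements e, f ∈ {1,…,m}, one has |L_e| · |L_f| ≥ |L| · |L_{ef}| (i.e., the lattice path matroid L[A,B] is negatively correlated: for a uniformly random basis B, Pr[e ∈ B] ≥ Pr[e ∈ B | f ∈ B]). -/
open scoped Classical

/-- The lattice path family `L[A,B]`: all `r`-element subsets `S` of `{1,…,m}` whose
partial counts lie between those of `A` and `B`. -/
noncomputable def latticeFamily (m r : ℕ) (A B : Finset ℕ) : Finset (Finset ℕ) :=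
  (Finset.Icc 1 m).powerset.filter fun S =>
    S.card = r ∧ ∀ k ∈ Finset.Icc 1 m,
      (A ∩ Finset.Icc 1 k).card ≤ (S ∩ Finset.Icc 1 k).card ∧
      (S ∩ Finset.Icc 1 k).card ≤ (B ∩ Finset.Icc 1 k).card

/-!
Read a set `S` in the family as the up-steps of a lattice path and fix `e < f`. Splitting the
path after step `f - 1` at height `x` writes the four counts `nᵢⱼ` (`i`, `j` recording whether
`e`, `f` are up-steps) as `∑ₓ pᵢ(x) qⱼ(x)`, with `pᵢ` counting prefixes and `qⱼ` counting
suffixes. Transfer recursions show that `p₁ / p₀` increases with the height (at step `e` it is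
`N(x - 1) / N(x)` for a log-concave `N`, and later steps preserve this) and that `q₁ / q₀`
decreases (suffix counts are log-concave in the starting height). The four functions theorem
on the chain of heights then gives `n₀₀ n₁₁ ≤ n₁₀ n₀₁`, which is negative correlation.
-/

open Finset

section Sequences

def shift (g : ℕ → ℕ) : ℕ → ℕ
  | 0 => 0
  | x + 1 => g x

@[simp] lemma shift_apply_zero (g : ℕ → ℕ) : shift g 0 = 0 := rfl
@[simp] lemma shift_apply_succ (g : ℕ → ℕ) (x : ℕ) : shift g (x + 1) = g x := rfl

@[simp] lemma shift_zero : shift 0 = 0 := by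
  funext x; cases x <;> rfl

lemma shift_add (g h : ℕ → ℕ) : shift (g + h) = shift g + shift h := by
  funext x; cases x <;> rfl

/-- `g₁ / g₀` is monotone, written without division. -/
def RatioMonotone (g₀ g₁ : ℕ → ℕ) : Prop :=
  ∀ ⦃u v⦄, u ≤ v → g₁ u * g₀ v ≤ g₀ u * g₁ v

/-- `g (x + 1) / g x` is antitone: log-concavity without internal zeros. -/
def LogConcave (g : ℕ → ℕ) : Prop :=
  RatioMonotone (fun x => g (x + 1)) g

variable {g g₀ g₁ : ℕ → ℕ}

lemma logConcave_iff_ratioMonotone_shift : LogConcave g ↔ RatioMonotone g (shift g) := by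
  constructor
  · intro h u v huv
    cases u with
    | zero => simp
    | succ u =>
      obtain ⟨v, rfl⟩ : ∃ w, v = w + 1 := ⟨v - 1, by omega⟩
      exact h (by omega)
  · intro h u v huv
    exact h (Nat.succ_le_succ huv)

lemma LogConcave.of_eq_zero_of_ne (c : ℕ) (hg : ∀ x ≠ c, g x = 0) : LogConcave g := by
  intro u v huv
  rcases eq_or_ne u c with rfl | hu
  · simp [hg (v + 1) (by omega)]
  · simp [hg u hu]

lemma RatioMonotone.indicator (h : RatioMonotone g₀ g₁) (s : Set ℕ) :
    RatioMonotone (s.indicator g₀) (s.indicator g₁) := by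
  intro u v huv
  by_cases hu : u ∈ s
  · by_cases hv : v ∈ s
    · simpa [Set.indicator_of_mem, hu, hv] using h huv
    · simp [hv]
  · simp [hu]

lemma LogConcave.indicator (h : LogConcave g) (s : Set ℕ) [s.OrdConnected] :
    LogConcave (s.indicator g) := by
  intro u v huv
  by_cases hu : u ∈ s
  · by_cases hv : v + 1 ∈ s
    · have hu' : u + 1 ∈ s := Set.OrdConnected.out' hu hv ⟨by omega, by omega⟩
      have hv' : v ∈ s := Set.OrdConnected.out' hu hv ⟨huv, by omega⟩
      simpa [Set.indicator_of_mem, hu, hv, hu', hv'] using h huv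
    · simp [hv]
  · simp [hu]

lemma RatioMonotone.add_shift (h : RatioMonotone g₀ g₁) :
    RatioMonotone (g₀ + shift g₀) (g₁ + shift g₁) := by
  intro u v huv
  rcases huv.eq_or_lt with rfl | huv
  · exact (mul_comm _ _).le
  obtain ⟨v, rfl⟩ : ∃ w, v = w + 1 := ⟨v - 1, by omega⟩
  cases u with
  | zero =>
    simp only [Pi.add_apply, shift_apply_zero, shift_apply_succ, add_zero]
    nlinarith [h huv.le, h (Nat.le_of_lt_succ huv)]
  | succ u =>
    simp only [Pi.add_apply, shift_apply_succ]
    nlinarith [h huv.le, h (Nat.le_of_lt_succ huv), h (show u ≤ v + 1 by omega),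
      h (show u ≤ v by omega)]

lemma RatioMonotone.add_comp_succ (h : RatioMonotone g₀ g₁) :
    RatioMonotone (g₀ + fun x => g₀ (x + 1)) (g₁ + fun x => g₁ (x + 1)) := by
  intro u v huv
  rcases huv.eq_or_lt with rfl | huv
  · exact (mul_comm _ _).le
  simp only [Pi.add_apply]
  nlinarith [h huv.le, h huv, h (show u ≤ v + 1 by omega), h (show u + 1 ≤ v + 1 by omega)]

lemma LogConcave.add_shift (h : LogConcave g) : LogConcave (g + shift g) := by
  rw [logConcave_iff_ratioMonotone_shift, shift_add] at *
  exact h.add_shift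

lemma LogConcave.add_comp_succ (h : LogConcave g) : LogConcave (g + fun x => g (x + 1)) :=
  RatioMonotone.add_comp_succ h

lemma sum_shift_mul {n : ℕ} (g h : ℕ → ℕ) (hg : g n = 0) :
    ∑ x ∈ range (n + 1), shift g x * h x = ∑ x ∈ range (n + 1), g x * h (x + 1) := by
  rw [sum_range_succ', sum_range_succ]
  simp [hg]

lemma sum_indicator_add_shift_mul {n : ℕ} (s : Set ℕ) (g₀ g₁ h : ℕ → ℕ) (hg : g₁ n = 0) :
    ∑ x ∈ range (n + 1), s.indicator (g₀ + shift g₁) x * h x =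
      ∑ x ∈ range (n + 1), g₀ x * s.indicator h x +
        ∑ x ∈ range (n + 1), g₁ x * s.indicator h (x + 1) := by
  have hx : ∀ x, s.indicator (g₀ + shift g₁) x * h x =
      g₀ x * s.indicator h x + shift g₁ x * s.indicator h x := by
    intro x
    simp only [Set.indicator_apply]
    split_ifs <;> simp [add_mul]
  rw [sum_congr rfl fun x _ => hx x, sum_add_distrib, sum_shift_mul _ _ hg]

lemma sum_mul_sum_le_of_ratioMonotone (s : Finset ℕ) {p₀ p₁ E₀ E₁ : ℕ → ℕ}
    (hp : RatioMonotone p₀ p₁) (hE : RatioMonotone E₁ E₀) :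
    (∑ x ∈ s, p₀ x * E₀ x) * ∑ x ∈ s, p₁ x * E₁ x ≤
      (∑ x ∈ s, p₁ x * E₀ x) * ∑ x ∈ s, p₀ x * E₁ x := by
  rw [mul_comm (∑ x ∈ s, p₁ x * E₀ x)]
  have := four_functions_theorem (fun x => p₀ x * E₀ x) (fun x => p₁ x * E₁ x)
    (fun x => p₀ x * E₁ x) (fun x => p₁ x * E₀ x) (fun _ => Nat.zero_le _) (fun _ => Nat.zero_le _)
    (fun _ => Nat.zero_le _) (fun _ => Nat.zero_le _) ?_ s s
  · rwa [infs_self.2 (LinearOrder.infClosed _), sups_eq_self.2 (LinearOrder.supClosed _)] at this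
  intro u v
  rcases le_total u v with huv | hvu
  · simp only [inf_of_le_left huv, sup_of_le_right huv]
    have := hE huv
    calc p₀ u * E₀ u * (p₁ v * E₁ v) = p₀ u * p₁ v * (E₀ u * E₁ v) := by ring
      _ ≤ p₀ u * p₁ v * (E₁ u * E₀ v) := by gcongr
      _ = _ := by ring
  · simp only [inf_of_le_right hvu, sup_of_le_left hvu]
    have := hp hvu
    calc p₀ u * E₀ u * (p₁ v * E₁ v) = p₁ v * p₀ u * (E₀ u * E₁ v) := by ring
      _ ≤ p₀ v * p₁ u * (E₀ u * E₁ v) := by gcongr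
      _ = _ := by ring

end Sequences

lemma Finset.card_filter_powerset_insert {α : Type*} [DecidableEq α] {s : Finset α} {t : α}
    (ht : t ∉ s) (P : Finset α → Prop) [DecidablePred P] :
    #{T ∈ (insert t s).powerset | P T} =
      #{T ∈ s.powerset | P T} + #{T ∈ s.powerset | P (insert t T)} := by
  simp only [card_filter]
  exact sum_powerset_insert ht _

lemma Finset.card_filter_and_left {α : Type*} (s : Finset α) (c : Prop) [Decidable c]
    (P : α → Prop) [DecidablePred P] :
    #{t ∈ s | c ∧ P t} = if c then #{t ∈ s | P t} else 0 := by
  split_ifs with h <;> simp [h]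

namespace LatticePath

/-- `T ⊆ (lo, hi]` is read as the set of up-steps of a lattice path that starts at height `x`
after step `lo`; the path must be at a height in `[a j, b j]` after each step `j ∈ (lo, hi]`. -/
def InBounds (a b : ℕ → ℕ) (x lo hi : ℕ) (T : Finset ℕ) : Prop :=
  ∀ j ∈ Ioc lo hi, x + #{t ∈ T | t ≤ j} ∈ Set.Icc (a j) (b j)

noncomputable def count (a b : ℕ → ℕ) (x lo hi : ℕ) (Q : Finset ℕ → Prop) (y : ℕ) : ℕ :=
  #{T ∈ (Ioc lo hi).powerset | InBounds a b x lo hi T ∧ x + #T = y ∧ Q T}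

variable {a b : ℕ → ℕ} {x lo hi : ℕ} {S T : Finset ℕ}

lemma inBounds_succ_right (hle : lo ≤ hi) (hS : S ⊆ Ioc lo (hi + 1)) :
    InBounds a b x lo (hi + 1) S ↔
      InBounds a b x lo hi S ∧ x + #S ∈ Set.Icc (a (hi + 1)) (b (hi + 1)) := by
  rw [InBounds, InBounds, ← insert_Ioc_right_eq_Ioc_add_one hle, forall_mem_insert, and_comm,
    filter_true_of_mem fun t ht => (mem_Ioc.1 (hS ht)).2]

lemma inBounds_succ_left (hlt : lo < hi) (hS : S ⊆ Ioc (lo + 1) hi) :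
    InBounds a b x lo hi S ↔
      x ∈ Set.Icc (a (lo + 1)) (b (lo + 1)) ∧ InBounds a b x (lo + 1) hi S := by
  rw [InBounds, InBounds, ← insert_Ioc_add_one_left_eq_Ioc hlt, forall_mem_insert,
    filter_false_of_mem fun t ht => not_le.2 (mem_Ioc.1 (hS ht)).1, card_empty, add_zero]

lemma inBounds_insert_of_lt {t : ℕ} (ht : hi < t) :
    InBounds a b x lo hi (insert t T) ↔ InBounds a b x lo hi T := by
  refine forall₂_congr fun j hj => ?_
  rw [filter_insert, if_neg (by simp only [mem_Ioc] at hj; omega)]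

lemma inBounds_insert_of_le {t : ℕ} (ht : t ≤ lo + 1) (hT : t ∉ T) :
    InBounds a b x lo hi (insert t T) ↔ InBounds a b (x + 1) lo hi T := by
  refine forall₂_congr fun j hj => ?_
  rw [filter_insert, if_pos (by simp only [mem_Ioc] at hj; omega),
    card_insert_of_notMem (by simp [hT]), add_comm _ 1, add_assoc]

variable {Q Q' : Finset ℕ → Prop}

lemma count_congr (h : ∀ T ⊆ Ioc lo hi, Q T ↔ Q' T) :
    count a b x lo hi Q = count a b x lo hi Q' := by
  funext y
  refine congrArg card (filter_congr fun T hT => ?_)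
  rw [h T (mem_powerset.1 hT)]

lemma count_false : count a b x lo hi (fun _ => False) = 0 := by
  funext y
  simp [count]

lemma count_self (y : ℕ) : count a b x lo lo Q y = if x = y ∧ Q ∅ then 1 else 0 := by
  simp only [count, Ioc_self, powerset_empty, filter_singleton, InBounds, notMem_empty,
    IsEmpty.forall_iff, implies_true, true_and, card_empty, add_zero]
  split_ifs <;> rfl

lemma count_eq_zero_of_lt {y : ℕ} (h : x + (hi - lo) < y) : count a b x lo hi Q y = 0 := by
  refine card_eq_zero.2 (filter_eq_empty_iff.2 fun T hT ⟨_, hy, _⟩ => ?_)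
  have := card_le_card (mem_powerset.1 hT)
  rw [Nat.card_Ioc] at this
  omega

lemma count_succ_right (hle : lo ≤ hi) (Q : Finset ℕ → Prop) :
    count a b x lo (hi + 1) Q = (Set.Icc (a (hi + 1)) (b (hi + 1))).indicator
      (count a b x lo hi Q + shift (count a b x lo hi fun T => Q (insert (hi + 1) T))) := by
  funext y
  have hnew : hi + 1 ∉ Ioc lo hi := by simp
  have hsub : ∀ T ∈ (Ioc lo hi).powerset, T ⊆ Ioc lo (hi + 1) := fun T hT =>
    (mem_powerset.1 hT).trans (Ioc_subset_Ioc_right hi.le_succ)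
  rw [count, ← insert_Ioc_right_eq_Ioc_add_one hle, card_filter_powerset_insert hnew,
    Set.indicator_add', Pi.add_apply, Set.indicator_apply, Set.indicator_apply]
  congr 1
  · rw [count, ← card_filter_and_left]
    refine congrArg card (filter_congr fun T hT => ?_)
    rw [inBounds_succ_right hle (hsub T hT)]
    exact ⟨fun ⟨⟨h₁, h⟩, h₂, h₃⟩ => ⟨h₂ ▸ h, h₁, h₂, h₃⟩,
      fun ⟨hy, h₁, h₂, h₃⟩ => ⟨⟨h₁, h₂ ▸ hy⟩, h₂, h₃⟩⟩
  · cases y with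
    | zero => simp
    | succ y =>
      rw [shift_apply_succ, count, ← card_filter_and_left]
      refine congrArg card (filter_congr fun T hT => ?_)
      have hT' : hi + 1 ∉ T := fun h => hnew (mem_powerset.1 hT h)
      rw [inBounds_succ_right hle (insert_subset (by simp; omega) (hsub T hT)),
        inBounds_insert_of_lt (lt_add_one hi), card_insert_of_notMem hT', ← add_assoc,
        Nat.add_right_cancel_iff]
      exact ⟨fun ⟨⟨h₁, h⟩, h₂, h₃⟩ => ⟨h₂ ▸ h, h₁, h₂, h₃⟩,
        fun ⟨hy, h₁, h₂, h₃⟩ => ⟨⟨h₁, h₂ ▸ hy⟩, h₂, h₃⟩⟩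

lemma count_succ_left (hlt : lo < hi) (Q : Finset ℕ → Prop) (y : ℕ) :
    (fun x => count a b x lo hi Q y) =
      (Set.Icc (a (lo + 1)) (b (lo + 1))).indicator (fun x => count a b x (lo + 1) hi Q y) +
        fun x => (Set.Icc (a (lo + 1)) (b (lo + 1))).indicator
          (fun x => count a b x (lo + 1) hi (fun T => Q (insert (lo + 1) T)) y) (x + 1) := by
  funext x
  have hnew : lo + 1 ∉ Ioc (lo + 1) hi := by simp
  rw [count, ← insert_Ioc_add_one_left_eq_Ioc hlt, card_filter_powerset_insert hnew,
    Pi.add_apply, Set.indicator_apply, Set.indicator_apply]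
  congr 1
  · rw [count, ← card_filter_and_left]
    refine congrArg card (filter_congr fun T hT => ?_)
    rw [inBounds_succ_left hlt (mem_powerset.1 hT), and_assoc]
  · rw [count, ← card_filter_and_left]
    refine congrArg card (filter_congr fun T hT => ?_)
    have hT' : lo + 1 ∉ T := fun h => hnew (mem_powerset.1 hT h)
    rw [inBounds_insert_of_le le_rfl hT', inBounds_succ_left hlt (mem_powerset.1 hT),
      card_insert_of_notMem hT', add_comm #T 1, ← add_assoc, and_assoc]

lemma logConcave_count (hle : lo ≤ hi) : LogConcave (count a b x lo hi fun _ => True) := by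
  induction hi, hle using Nat.le_induction with
  | base => exact .of_eq_zero_of_ne x fun y hy => by simp [count_self, Ne.symm hy]
  | succ hi hle ih =>
    rw [count_succ_right hle]
    exact ih.add_shift.indicator _

lemma logConcave_count_start (hle : lo ≤ hi) (y : ℕ) :
    LogConcave fun x => count a b x lo hi (fun _ => True) y := by
  induction hle using Nat.decreasingInduction with
  | self => exact .of_eq_zero_of_ne y fun x hx => by simp [count_self, hx]
  | of_succ lo hlt ih =>
    rw [count_succ_left hlt]
    exact (ih.indicator _).add_comp_succ

lemma ratioMonotone_count_mem {e : ℕ} (he : lo < e) (hle : e ≤ hi) :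
    RatioMonotone (count a b x lo hi fun T => e ∉ T) (count a b x lo hi fun T => e ∈ T) := by
  induction hi, hle using Nat.le_induction with
  | base =>
    obtain ⟨k, rfl⟩ : ∃ k, e = k + 1 := ⟨e - 1, by omega⟩
    have hk : lo ≤ k := by omega
    have hout : ∀ T ⊆ Ioc lo k, k + 1 ∉ T := fun T hT h => by simpa using hT h
    have h₀ : count a b x lo k (fun T => k + 1 ∉ T) = count a b x lo k fun _ => True :=
      count_congr fun T hT => iff_true_intro (hout T hT)
    have h₁ : count a b x lo k (fun T => k + 1 ∈ T) = count a b x lo k fun _ => False :=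
      count_congr fun T hT => iff_false_intro (hout T hT)
    rw [count_succ_right hk, count_succ_right hk]
    simp only [mem_insert_self, not_true_eq_false, h₀, h₁, count_false, shift_zero, add_zero,
      zero_add]
    exact (logConcave_iff_ratioMonotone_shift.1 (logConcave_count hk)).indicator _
  | succ hi hle ih =>
    have hne : e ≠ hi + 1 := by omega
    rw [count_succ_right (by omega), count_succ_right (by omega)]
    simp only [mem_insert, hne, false_or]
    exact ih.add_shift.indicator _

lemma count_and_not_mem {t : ℕ} (ht : hi < t) (Q : Finset ℕ → Prop) :
    count a b x lo hi (fun T => Q T ∧ t ∉ T) = count a b x lo hi Q :=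
  count_congr fun _ hT => and_iff_left fun h => absurd (mem_Ioc.1 (hT h)).2 (not_le.2 ht)

lemma count_and_mem {t : ℕ} (ht : hi < t) (Q : Finset ℕ → Prop) :
    count a b x lo hi (fun T => Q T ∧ t ∈ T) = 0 :=
  (count_congr fun _ hT => iff_false_intro fun h => absurd (mem_Ioc.1 (hT h.2)).2
    (not_le.2 ht)).trans count_false

variable {m r : ℕ}

lemma sum_count_mul_count_succ {k : ℕ} (hk : k < m) (Q : Finset ℕ → Prop) :
    ∑ x ∈ range (m + 1), count a b 0 0 (k + 1) Q x * count a b x (k + 1) m (fun _ => True) r =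
      ∑ x ∈ range (m + 1), count a b 0 0 k Q x *
          (Set.Icc (a (k + 1)) (b (k + 1))).indicator
            (fun x => count a b x (k + 1) m (fun _ => True) r) x +
        ∑ x ∈ range (m + 1), count a b 0 0 k (fun T => Q (insert (k + 1) T)) x *
          (Set.Icc (a (k + 1)) (b (k + 1))).indicator
            (fun x => count a b x (k + 1) m (fun _ => True) r) (x + 1) := by
  rw [count_succ_right k.zero_le]
  exact sum_indicator_add_shift_mul _ _ _ _ (count_eq_zero_of_lt (by omega))

lemma count_eq_sum_mul {k : ℕ} (hk : k ≤ m) {Q : Finset ℕ → Prop}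
    (hQ : ∀ t, k < t → ∀ T, Q (insert t T) ↔ Q T) :
    count a b 0 0 m Q r =
      ∑ x ∈ range (m + 1), count a b 0 0 k Q x * count a b x k m (fun _ => True) r := by
  induction hk using Nat.decreasingInduction with
  | self =>
    simp only [count_self, and_true, mul_ite, mul_one, mul_zero, sum_ite_eq', mem_range]
    split_ifs with hr
    · rfl
    · exact count_eq_zero_of_lt (by omega)
  | of_succ k hk ih =>
    have hQk : (fun T => Q (insert (k + 1) T)) = Q := funext fun T => propext (hQ _ (by omega) T)
    rw [ih fun t ht => hQ t (by omega), sum_count_mul_count_succ hk, hQk, ← sum_add_distrib]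
    refine sum_congr rfl fun x _ => ?_
    rw [← mul_add]
    exact congrArg _ (congrFun (count_succ_left hk _ r) x).symm

lemma count_and_not_mem_eq_sum {k : ℕ} (hk : k < m) {P : Finset ℕ → Prop}
    (hP : ∀ t, k < t → ∀ T, P (insert t T) ↔ P T) :
    count a b 0 0 m (fun S => P S ∧ k + 1 ∉ S) r =
      ∑ x ∈ range (m + 1), count a b 0 0 k P x *
        (Set.Icc (a (k + 1)) (b (k + 1))).indicator
          (fun x => count a b x (k + 1) m (fun _ => True) r) x := by
  rw [count_eq_sum_mul hk fun t ht T => by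
      rw [hP t (by omega), mem_insert, or_iff_right (by omega)],
    sum_count_mul_count_succ hk, count_and_not_mem (lt_add_one k)]
  simp only [mem_insert_self, not_true_eq_false, and_false, count_false, Pi.zero_apply, zero_mul,
    sum_const_zero, add_zero]

lemma count_and_mem_eq_sum {k : ℕ} (hk : k < m) {P : Finset ℕ → Prop}
    (hP : ∀ t, k < t → ∀ T, P (insert t T) ↔ P T) :
    count a b 0 0 m (fun S => P S ∧ k + 1 ∈ S) r =
      ∑ x ∈ range (m + 1), count a b 0 0 k P x *
        (Set.Icc (a (k + 1)) (b (k + 1))).indicator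
          (fun x => count a b x (k + 1) m (fun _ => True) r) (x + 1) := by
  have hPk : (fun T => P (insert (k + 1) T)) = P := funext fun T => propext (hP _ (by omega) T)
  rw [count_eq_sum_mul hk fun t ht T => by
      rw [hP t (by omega), mem_insert, or_iff_right (by omega)],
    sum_count_mul_count_succ hk, count_and_mem (lt_add_one k)]
  simp only [mem_insert_self, and_true, hPk, Pi.zero_apply, zero_mul, sum_const_zero, zero_add]

theorem count_mul_count_le {e f : ℕ} (he : 0 < e) (hef : e < f) (hf : f ≤ m) :
    count a b 0 0 m (fun S => e ∉ S ∧ f ∉ S) r * count a b 0 0 m (fun S => e ∈ S ∧ f ∈ S) r ≤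
      count a b 0 0 m (fun S => e ∈ S ∧ f ∉ S) r * count a b 0 0 m (fun S => e ∉ S ∧ f ∈ S) r := by
  obtain ⟨k, rfl⟩ : ∃ k, f = k + 1 := ⟨f - 1, by omega⟩
  have hk : k < m := by omega
  have hmem : ∀ t, k < t → ∀ T, e ∈ insert t T ↔ e ∈ T := fun t ht T => by
    rw [mem_insert, or_iff_right (by omega)]
  have hnmem : ∀ t, k < t → ∀ T, e ∉ insert t T ↔ e ∉ T := fun t ht T => (hmem t ht T).not
  rw [count_and_not_mem_eq_sum (P := fun S => e ∉ S) hk hnmem, count_and_not_mem_eq_sum hk hmem,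
    count_and_mem_eq_sum (P := fun S => e ∉ S) hk hnmem, count_and_mem_eq_sum hk hmem]
  exact sum_mul_sum_le_of_ratioMonotone _ (ratioMonotone_count_mem he (by omega))
    ((logConcave_count_start hk r).indicator _)

end LatticePath

lemma Finset.card_mul_card_filter_and_le {α : Type*} (s : Finset α) (p q : α → Prop)
    [DecidablePred p] [DecidablePred q]
    (h : #{x ∈ s | ¬p x ∧ ¬q x} * #{x ∈ s | p x ∧ q x} ≤
      #{x ∈ s | p x ∧ ¬q x} * #{x ∈ s | ¬p x ∧ q x}) :
    #s * #{x ∈ s | p x ∧ q x} ≤ #{x ∈ s | p x} * #{x ∈ s | q x} := by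
  have hs := card_filter_add_card_filter_not (s := s) p
  have hp : #{x ∈ s | p x ∧ q x} + #{x ∈ s | p x ∧ ¬q x} = #{x ∈ s | p x} := by
    rw [← filter_filter, ← filter_filter, card_filter_add_card_filter_not]
  have hnp : #{x ∈ s | ¬p x ∧ q x} + #{x ∈ s | ¬p x ∧ ¬q x} = #{x ∈ s | ¬p x} := by
    rw [← filter_filter, ← filter_filter, card_filter_add_card_filter_not]
  have hq : #{x ∈ s | p x ∧ q x} + #{x ∈ s | ¬p x ∧ q x} = #{x ∈ s | q x} := by
    simp only [and_comm (b := q _)]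
    rw [← filter_filter, ← filter_filter, card_filter_add_card_filter_not]
  rw [← hs, ← hp, ← hnp, ← hq]
  nlinarith

lemma inter_Icc_one_eq_filter_le {m : ℕ} {S : Finset ℕ} (hS : S ⊆ Icc 1 m) (k : ℕ) :
    S ∩ Icc 1 k = {t ∈ S | t ≤ k} := by
  ext t
  simp only [mem_inter, mem_Icc, mem_filter]
  exact ⟨fun ⟨ht, _, htk⟩ => ⟨ht, htk⟩, fun ⟨ht, htk⟩ => ⟨ht, (mem_Icc.1 (hS ht)).1, htk⟩⟩

lemma card_filter_latticeFamily (m r : ℕ) (A B : Finset ℕ) (P : Finset ℕ → Prop)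
    [DecidablePred P] :
    #{S ∈ latticeFamily m r A B | P S} =
      LatticePath.count (fun j => #(A ∩ Icc 1 j)) (fun j => #(B ∩ Icc 1 j)) 0 0 m P r := by
  rw [LatticePath.count, ← Icc_add_one_left_eq_Ioc, zero_add]
  congr 1
  ext S
  simp only [latticeFamily, mem_filter, mem_powerset, LatticePath.InBounds,
    ← Icc_add_one_left_eq_Ioc, zero_add, Set.mem_Icc]
  by_cases hS : S ⊆ Icc 1 m
  · simp only [hS, inter_Icc_one_eq_filter_le hS]
    tauto
  · simp [hS]

theorem latticeFamily_negatively_correlated_general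
    (m r : ℕ)
    (A B : Finset ℕ)
    (e f : ℕ) (he : e ∈ Finset.Icc 1 m) (hf : f ∈ Finset.Icc 1 m) (hef : e ≠ f) :
    ((latticeFamily m r A B).filter (fun S => e ∈ S)).card *
      ((latticeFamily m r A B).filter (fun S => f ∈ S)).card ≥
    (latticeFamily m r A B).card *
      ((latticeFamily m r A B).filter (fun S => e ∈ S ∧ f ∈ S)).card := by
  wlog hlt : e < f generalizing e f
  · have := this f e hf he hef.symm (by omega)
    simp only [and_comm (a := f ∈ _)] at this
    rwa [mul_comm] at this
  rw [mem_Icc] at he hf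
  refine card_mul_card_filter_and_le _ _ _ ?_
  simp only [card_filter_latticeFamily]
  exact LatticePath.count_mul_count_le he.1 hlt hf.2

/-- Lattice path matroids are negatively correlated:
`|L_e| · |L_f| ≥ |L| · |L_{ef}|`. -/
theorem latticeFamily_negatively_correlated
    (m r : ℕ) (hm : 1 ≤ m) (hr : r ≤ m)
    (A B : Finset ℕ) (hA : A ⊆ Finset.Icc 1 m) (hB : B ⊆ Finset.Icc 1 m)
    (hAcard : A.card = r) (hBcard : B.card = r)
    (hAB : ∀ k ∈ Finset.Icc 1 m,
      (A ∩ Finset.Icc 1 k).card ≤ (B ∩ Finset.Icc 1 k).card)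
    (e f : ℕ) (he : e ∈ Finset.Icc 1 m) (hf : f ∈ Finset.Icc 1 m) (hef : e ≠ f) :
    ((latticeFamily m r A B).filter (fun S => e ∈ S)).card *
      ((latticeFamily m r A B).filter (fun S => f ∈ S)).card ≥
    (latticeFamily m r A B).card *
      ((latticeFamily m r A B).filter (fun S => e ∈ S ∧ f ∈ S)).card :=
  latticeFamily_negatively_correlated_general m r A B e f he hf hef
end

section
/- For every lattice path family L = L[S_A, S_B] on ground set {1,…,m} and every pair of distinct elements e, f ∈ {1,…,m}, one has |L_{ef}| · |L^{ef}| ≤ |L_e^f| · |L_f^e|; that is, there is an injection from L_{ef} × L^{ef} into L_e^f × L_f^e. -/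
/-!
Say `e < f` and cut each path after step `e`. Let `p_b β` count the initial segments that end at
height `β` and take (`b = 1`) or skip (`b = 0`) step `e`, and `s_b β` the final segments that start
at height `β` and take or skip step `f`; then the four classes have sizes `∑ β, p_b β * s_b' β`.
Both kernels are totally positive of order two. For `p` this is the log-concavity of the number of
initial segments in their end height, which survives every step since a step only convolves with
`(1, 1)` and cuts off to a window; for `s` it follows by induction down from `f`, each step back
applying one such operator to `s₀` and `s₁` alike. The inequality is then the composition of two
TP₂ kernels, an instance of the four functions theorem on the chain `ℕ`.
-/

open scoped Classical

open Finset

section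

variable {α : Type*} [LinearOrder α]

def RatioAntitone (u v : α → ℕ) : Prop := ∀ ⦃i j⦄, i ≤ j → u j * v i ≤ u i * v j

namespace RatioAntitone

variable {u v u' v' : α → ℕ}

lemma refl (u : α → ℕ) : RatioAntitone u u := fun _ _ _ => (Nat.mul_comm _ _).le

lemma mul (h : RatioAntitone u v) (h' : RatioAntitone u' v') :
    RatioAntitone (u * u') (v * v') := fun i j hij =>
  calc u j * u' j * (v i * v' i) = (u j * v i) * (u' j * v' i) := by ring
    _ ≤ (u i * v j) * (u' i * v' j) := Nat.mul_le_mul (h hij) (h' hij)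
    _ = u i * u' i * (v j * v' j) := by ring

lemma sum_mul_sum_le {a b : α → ℕ} (hab : RatioAntitone a b) (huv : RatioAntitone u v)
    (s : Finset α) :
    (∑ i ∈ s, b i * u i) * ∑ i ∈ s, a i * v i ≤ (∑ i ∈ s, a i * u i) * ∑ i ∈ s, b i * v i := by
  have key : ∀ i j, (b * u) i * (a * v) j ≤ (a * u) (i ⊓ j) * (b * v) (i ⊔ j) := by
    intro i j
    rcases le_total i j with h | h
    · simp only [Pi.mul_apply, inf_of_le_left h, sup_of_le_right h]
      calc b i * u i * (a j * v j) = (a j * b i) * (u i * v j) := by ring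
        _ ≤ (a i * b j) * (u i * v j) := Nat.mul_le_mul_right _ (hab h)
        _ = a i * u i * (b j * v j) := by ring
    · simp only [Pi.mul_apply, inf_of_le_right h, sup_of_le_left h]
      calc b i * u i * (a j * v j) = (a j * b i) * (u i * v j) := by ring
        _ ≤ (a j * b i) * (u j * v i) := Nat.mul_le_mul_left _ (huv h)
        _ = a j * u j * (b i * v i) := by ring
  have := four_functions_theorem (b * u) (a * v) (a * u) (b * v) (fun _ => Nat.zero_le _)
    (fun _ => Nat.zero_le _) (fun _ => Nat.zero_le _) (fun _ => Nat.zero_le _) key s s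
  rwa [infs_self.2 (LinearOrder.infClosed _), sups_eq_self.2 (LinearOrder.supClosed _)] at this

lemma add_comp_succ {u v : ℕ → ℕ} (h : RatioAntitone u v) :
    RatioAntitone (fun n => u n + u (n + 1)) (fun n => v n + v (n + 1)) := by
  intro i j hij
  rcases hij.eq_or_lt with rfl | hlt
  · exact le_rfl
  · nlinarith [h hij, h hlt, h (Nat.le_succ_of_le hij), h (Nat.succ_le_succ hij)]

end RatioAntitone

end

/-- Log-concavity in the strong form `u i * u (j + 1) ≤ u (i + 1) * u j` for all `i ≤ j`, which
also rules out internal zeros. -/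
def IsLogConcave (u : ℕ → ℕ) : Prop := RatioAntitone (fun n => u (n + 1)) u

def shiftRight (u : ℕ → ℕ) : ℕ → ℕ
  | 0 => 0
  | n + 1 => u n

namespace IsLogConcave

variable {u v : ℕ → ℕ}

lemma mul (hu : IsLogConcave u) (hv : IsLogConcave v) : IsLogConcave (u * v) :=
  RatioAntitone.mul hu hv

lemma add_comp_succ (hu : IsLogConcave u) : IsLogConcave fun n => u n + u (n + 1) :=
  RatioAntitone.add_comp_succ hu

lemma shiftRight (hu : IsLogConcave u) : IsLogConcave (_root_.shiftRight u) := by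
  rintro (_ | i) (_ | j) hij
  · exact le_rfl
  · simp [_root_.shiftRight]
  · omega
  · exact hu (Nat.le_of_succ_le_succ hij)

lemma add_shiftRight (hu : IsLogConcave u) : IsLogConcave (u + _root_.shiftRight u) := by
  convert hu.shiftRight.add_comp_succ using 1
  funext n
  cases n <;> simp [_root_.shiftRight, add_comm]

lemma indicator {s : Set ℕ} [s.OrdConnected] [DecidablePred (· ∈ s)] :
    IsLogConcave fun n => if n ∈ s then 1 else 0 := by
  intro i j hij
  by_cases h : i ∈ s ∧ j + 1 ∈ s
  · have hi : i + 1 ∈ s := Set.OrdConnected.out ‹_› h.1 h.2 ⟨by omega, by omega⟩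
    have hj : j ∈ s := Set.OrdConnected.out ‹_› h.1 h.2 ⟨by omega, by omega⟩
    simp [h.1, h.2, hi, hj]
  · rcases not_and_or.1 h with h | h <;> simp [h]

end IsLogConcave

section BoundedPaths

variable (lo hi : ℕ → ℕ)

/-- Lattice paths from height `γ` after step `c` to height `δ` after step `d`, encoded by their sets
of up-steps, whose height after each step `k` lies in `[lo k, hi k]`. -/
def boundedPaths (c d γ δ : ℕ) : Finset (Finset ℕ) :=
  {T ∈ (Icc (c + 1) d).powerset | γ + #T = δ ∧
    ∀ k ∈ Icc (c + 1) d, γ + #{i ∈ T | i ≤ k} ∈ Set.Icc (lo k) (hi k)}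

def window (k γ : ℕ) : ℕ := if γ ∈ Set.Icc (lo k) (hi k) then 1 else 0

variable {lo hi} {c d x γ δ e f : ℕ}

lemma mem_boundedPaths {T : Finset ℕ} :
    T ∈ boundedPaths lo hi c d γ δ ↔ T ⊆ Icc (c + 1) d ∧ γ + #T = δ ∧
      ∀ k ∈ Icc (c + 1) d, γ + #{i ∈ T | i ≤ k} ∈ Set.Icc (lo k) (hi k) := by
  simp [boundedPaths]

lemma isLogConcave_window (k : ℕ) : IsLogConcave (window lo hi k) :=
  IsLogConcave.indicator (s := Set.Icc (lo k) (hi k))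

lemma card_boundedPaths_self : #(boundedPaths lo hi c c γ δ) = if γ = δ then 1 else 0 := by
  simp [boundedPaths, filter_singleton, apply_ite card]

lemma card_filter_le_eq_add (S : Finset ℕ) {x k : ℕ} (h : x ≤ k) :
    #{i ∈ S | i ≤ k} = #{i ∈ S | i ≤ x} + #{i ∈ {i ∈ S | x < i} | i ≤ k} := by
  rw [filter_filter, ← card_union_of_disjoint (disjoint_filter.2 fun _ _ h₁ h₂ => by omega)]
  congr 1
  ext i
  by_cases hiS : i ∈ S <;> simp only [mem_filter, mem_union, hiS, true_and, false_and, or_self]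
  omega

lemma mem_boundedPaths_iff_split (hcx : c ≤ x) (hxd : x ≤ d) {S : Finset ℕ} :
    S ∈ boundedPaths lo hi c d γ δ ↔
      {i ∈ S | i ≤ x} ∈ boundedPaths lo hi c x γ (γ + #{i ∈ S | i ≤ x}) ∧
      {i ∈ S | x < i} ∈ boundedPaths lo hi x d (γ + #{i ∈ S | i ≤ x}) δ := by
  have hcard : #{i ∈ S | i ≤ x} + #{i ∈ S | x < i} = #S := by
    simpa only [not_le] using card_filter_add_card_filter_not (s := S) (p := (· ≤ x))
  have hlow : ∀ k ≤ x, {i ∈ {i ∈ S | i ≤ x} | i ≤ k} = {i ∈ S | i ≤ k} := fun k hk => by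
    rw [filter_filter]; exact filter_congr fun i _ => by omega
  simp only [mem_boundedPaths, subset_iff, mem_filter, mem_Icc, true_and]
  constructor
  · rintro ⟨hS, hsum, hh⟩
    refine ⟨⟨fun i h => ⟨(hS h.1).1, h.2⟩, fun k hk => ?_⟩,
      ⟨fun i h => ⟨h.2, (hS h.1).2⟩, by omega, fun k hk => ?_⟩⟩
    · rw [hlow k hk.2]; exact hh k ⟨hk.1, hk.2.trans hxd⟩
    · rw [add_assoc, ← card_filter_le_eq_add S (by omega)]; exact hh k ⟨by omega, hk.2⟩
  · rintro ⟨⟨hS₁, hh₁⟩, ⟨hS₂, hsum, hh₂⟩⟩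
    refine ⟨fun i hiS => ?_, by omega, fun k hk => ?_⟩
    · rcases le_or_gt i x with h | h
      · exact ⟨(hS₁ ⟨hiS, h⟩).1, by omega⟩
      · exact ⟨by omega, (hS₂ ⟨hiS, h⟩).2⟩
    · rcases le_or_gt k x with h | h
      · rw [← hlow k h]; exact hh₁ k ⟨hk.1, h⟩
      · rw [card_filter_le_eq_add S h.le, ← add_assoc]; exact hh₂ k ⟨h, hk.2⟩

lemma filter_union_of_mem_boundedPaths {T₁ T₂ : Finset ℕ} {β : ℕ}
    (h₁ : T₁ ∈ boundedPaths lo hi c x γ β) (h₂ : T₂ ∈ boundedPaths lo hi x d β δ) :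
    {i ∈ T₁ ∪ T₂ | i ≤ x} = T₁ ∧ {i ∈ T₁ ∪ T₂ | x < i} = T₂ := by
  have hT₁ : ∀ i ∈ T₁, c + 1 ≤ i ∧ i ≤ x := fun i h => mem_Icc.1 ((mem_boundedPaths.1 h₁).1 h)
  have hT₂ : ∀ i ∈ T₂, x + 1 ≤ i ∧ i ≤ d := fun i h => mem_Icc.1 ((mem_boundedPaths.1 h₂).1 h)
  constructor
  · rw [filter_union, filter_true_of_mem fun i h => (hT₁ i h).2,
      filter_false_of_mem fun i h => by have := hT₂ i h; omega, union_empty]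
  · rw [filter_union, filter_false_of_mem fun i h => by have := hT₁ i h; omega,
      filter_true_of_mem fun i h => by have := hT₂ i h; omega, empty_union]

lemma card_filter_boundedPaths_eq_sum (hcx : c ≤ x) (hxd : x ≤ d) (p q : Finset ℕ → Prop)
    [DecidablePred p] [DecidablePred q] {t : Finset ℕ}
    (ht : ∀ β ≤ δ, β ≤ γ + (x - c) → β ∈ t) :
    #{S ∈ boundedPaths lo hi c d γ δ | p {i ∈ S | i ≤ x} ∧ q {i ∈ S | x < i}} =
      ∑ β ∈ t, #{T ∈ boundedPaths lo hi c x γ β | p T} *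
        #{T ∈ boundedPaths lo hi x d β δ | q T} := by
  rw [card_eq_sum_card_fiberwise (f := fun S => γ + #{i ∈ S | i ≤ x}) fun S hS => ?_]
  · refine sum_congr rfl fun β _ => ?_
    rw [← card_product]
    refine card_nbij' (fun S => ({i ∈ S | i ≤ x}, {i ∈ S | x < i})) (fun T => T.1 ∪ T.2)
      (fun S hS => ?_) (fun T hT => ?_) (fun S _ => ?_) (fun T hT => ?_)
    · simp only [mem_coe, mem_filter, mem_product] at hS ⊢
      obtain ⟨⟨hS, hp, hq⟩, rfl⟩ := hS
      obtain ⟨h₁, h₂⟩ := (mem_boundedPaths_iff_split hcx hxd).1 hS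
      exact ⟨⟨h₁, hp⟩, h₂, hq⟩
    · simp only [mem_coe, mem_filter, mem_product] at hT ⊢
      obtain ⟨⟨h₁, hp⟩, ⟨h₂, hq⟩⟩ := hT
      obtain ⟨e₁, e₂⟩ := filter_union_of_mem_boundedPaths h₁ h₂
      have hβ : γ + #{i ∈ T.1 ∪ T.2 | i ≤ x} = β := by
        rw [e₁]; exact (mem_boundedPaths.1 h₁).2.1
      refine ⟨⟨(mem_boundedPaths_iff_split hcx hxd).2 ?_, ?_⟩, hβ⟩
      · rw [hβ, e₁, e₂]; exact ⟨h₁, h₂⟩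
      · rw [e₁, e₂]; exact ⟨hp, hq⟩
    · simpa only [not_le] using filter_union_filter_not_eq (p := (· ≤ x)) S
    · simp only [mem_coe, mem_filter, mem_product] at hT
      obtain ⟨e₁, e₂⟩ := filter_union_of_mem_boundedPaths hT.1.1 hT.2.1
      exact Prod.ext e₁ e₂
  · obtain ⟨hS, -⟩ := mem_filter.1 hS
    have hsub := (mem_boundedPaths.1 ((mem_boundedPaths_iff_split hcx hxd).1 hS).1).1
    have hle : #{i ∈ S | i ≤ x} ≤ #S := card_le_card (filter_subset _ _)
    have hδ := (mem_boundedPaths.1 hS).2.1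
    have hx := card_le_card hsub
    simp only [Nat.card_Icc] at hx
    exact ht _ (by dsimp only; omega) (by dsimp only; omega)

lemma card_filter_boundedPaths_succ (b : Bool) {β : ℕ} :
    #{T ∈ boundedPaths lo hi c (c + 1) γ β | (c + 1 ∈ T ↔ b)} =
      if β = γ + b.toNat then window lo hi (c + 1) β else 0 := by
  have : ({c + 1} : Finset ℕ).powerset = {∅, {c + 1}} := by
    ext T; simp [subset_singleton_iff]
  simp only [boundedPaths, Icc_self, this, filter_filter]
  by_cases hβ : β = γ + b.toNat
  · subst hβ
    cases b <;> simp [filter_insert, filter_singleton, window, apply_ite card]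
  · cases b <;> simp_all [filter_insert, filter_singleton, eq_comm]

lemma card_filter_boundedPaths_first_step (hcd : c < d) (b : Bool) (q : Finset ℕ → Prop)
    [DecidablePred q] (hq : ∀ S, q S ↔ q {i ∈ S | c + 1 < i}) :
    #{S ∈ boundedPaths lo hi c d γ δ | (c + 1 ∈ S ↔ b) ∧ q S} =
      window lo hi (c + 1) (γ + b.toNat) *
        #{T ∈ boundedPaths lo hi (c + 1) d (γ + b.toNat) δ | q T} := by
  have hb := b.toNat_le
  have hsplit : {S ∈ boundedPaths lo hi c d γ δ | (c + 1 ∈ S ↔ b) ∧ q S} =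
      {S ∈ boundedPaths lo hi c d γ δ | (c + 1 ∈ ({i ∈ S | i ≤ c + 1} : Finset ℕ) ↔ b) ∧
        q {i ∈ S | c + 1 < i}} :=
    filter_congr fun S _ => by rw [← hq, mem_filter, and_iff_left le_rfl]
  rw [hsplit]
  refine (card_filter_boundedPaths_eq_sum (Nat.le_add_right c 1) hcd (fun T => c + 1 ∈ T ↔ b) q
    (t := range (γ + 2)) fun β _ hβ => mem_range.2 (by omega)).trans ?_
  simp_rw [card_filter_boundedPaths_succ, ite_mul, zero_mul]
  rw [sum_ite_eq', if_pos (mem_range.2 (by omega))]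

lemma card_filter_boundedPaths_eq_add (hcd : c < d) (q : Finset ℕ → Prop) [DecidablePred q]
    (hq : ∀ S, q S ↔ q {i ∈ S | c + 1 < i}) :
    #{S ∈ boundedPaths lo hi c d γ δ | q S} =
      window lo hi (c + 1) γ * #{T ∈ boundedPaths lo hi (c + 1) d γ δ | q T} +
      window lo hi (c + 1) (γ + 1) * #{T ∈ boundedPaths lo hi (c + 1) d (γ + 1) δ | q T} := by
  have h₀ := card_filter_boundedPaths_first_step (lo := lo) (hi := hi) (γ := γ) (δ := δ) hcd
    false q hq
  have h₁ := card_filter_boundedPaths_first_step (lo := lo) (hi := hi) (γ := γ) (δ := δ) hcd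
    true q hq
  simp only [Bool.toNat_false, Bool.toNat_true, add_zero, Bool.false_eq_true, iff_false,
    iff_true] at h₀ h₁
  rw [← h₀, ← h₁, ← card_filter_add_card_filter_not (p := (c + 1 ∈ ·)), add_comm, filter_filter,
    filter_filter]
  congr 2 <;> exact filter_congr fun S _ => and_comm

lemma card_filter_boundedPaths_last_step (hcx : c ≤ x) (b : Bool) :
    #{S ∈ boundedPaths lo hi c (x + 1) γ δ | (x + 1 ∈ S ↔ b)} =
      window lo hi (x + 1) δ *
        (bif b then shiftRight fun β => #(boundedPaths lo hi c x γ β)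
          else fun β => #(boundedPaths lo hi c x γ β)) δ := by
  have hsplit : {S ∈ boundedPaths lo hi c (x + 1) γ δ | (x + 1 ∈ S ↔ b)} =
      {S ∈ boundedPaths lo hi c (x + 1) γ δ | True ∧ (x + 1 ∈ ({i ∈ S | x < i} : Finset ℕ) ↔ b)} :=
    filter_congr fun S _ => by rw [true_and, mem_filter, and_iff_left (Nat.lt_add_one x)]
  rw [hsplit]
  refine (card_filter_boundedPaths_eq_sum hcx (Nat.le_add_right x 1) (fun _ => True)
    (fun T => x + 1 ∈ T ↔ b) (t := range (δ + 1)) fun β hβ _ => mem_range.2 (by omega)).trans ?_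
  simp_rw [filter_true, card_filter_boundedPaths_succ, mul_ite, mul_zero]
  cases b with
  | false => simp [mul_comm]
  | true =>
    cases δ with
    | zero => simp [shiftRight]
    | succ δ => simp [shiftRight, sum_ite_eq, mul_comm]

lemma isLogConcave_card_boundedPaths_end (hcx : c ≤ x) :
    IsLogConcave fun β => #(boundedPaths lo hi c x γ β) := by
  induction x, hcx using Nat.le_induction with
  | base =>
    simp_rw [card_boundedPaths_self, eq_comm (a := γ)]
    exact IsLogConcave.indicator (s := {γ})
  | succ x hcx ih =>
    have h : (fun β => #(boundedPaths lo hi c (x + 1) γ β)) =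
        window lo hi (x + 1) * ((fun β => #(boundedPaths lo hi c x γ β)) +
          shiftRight fun β => #(boundedPaths lo hi c x γ β)) := by
      funext β
      rw [← card_filter_add_card_filter_not (p := (x + 1 ∈ ·))]
      have h₀ := card_filter_boundedPaths_last_step (lo := lo) (hi := hi) (γ := γ) (δ := β)
        hcx false
      have h₁ := card_filter_boundedPaths_last_step (lo := lo) (hi := hi) (γ := γ) (δ := β)
        hcx true
      simp only [Bool.false_eq_true, iff_false, iff_true, cond_false, cond_true] at h₀ h₁
      rw [h₀, h₁, Pi.mul_apply, Pi.add_apply, mul_add, add_comm]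
    rw [h]
    exact (isLogConcave_window _).mul ih.add_shiftRight

lemma isLogConcave_card_boundedPaths_start (hcd : c ≤ d) :
    IsLogConcave fun γ => #(boundedPaths lo hi c d γ δ) := by
  induction hcd using Nat.decreasingInduction with
  | self =>
    simp_rw [card_boundedPaths_self]
    exact IsLogConcave.indicator (s := {δ})
  | of_succ c hcd ih =>
    have h := fun γ => card_filter_boundedPaths_eq_add (lo := lo) (hi := hi) (γ := γ) (δ := δ) hcd
      (fun _ => True) fun _ => Iff.rfl
    simp only [filter_true] at h
    simp_rw [h]
    exact ((isLogConcave_window _).mul ih).add_comp_succ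

lemma ratioAntitone_card_filter_boundedPaths_end (hce : c < e) :
    RatioAntitone (fun β => #{T ∈ boundedPaths lo hi c e γ β | e ∉ T})
      (fun β => #{T ∈ boundedPaths lo hi c e γ β | e ∈ T}) := by
  obtain ⟨x, rfl⟩ : ∃ x, e = x + 1 := ⟨e - 1, by omega⟩
  have h₀ := fun β => card_filter_boundedPaths_last_step (lo := lo) (hi := hi) (γ := γ) (δ := β)
    (Nat.le_of_lt_succ hce) false
  have h₁ := fun β => card_filter_boundedPaths_last_step (lo := lo) (hi := hi) (γ := γ) (δ := β)
    (Nat.le_of_lt_succ hce) true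
  simp only [Bool.false_eq_true, iff_false, iff_true, cond_false, cond_true] at h₀ h₁
  simp_rw [h₀, h₁]
  exact (RatioAntitone.refl _).mul
    (isLogConcave_card_boundedPaths_end (Nat.le_of_lt_succ hce)).shiftRight

lemma ratioAntitone_card_filter_boundedPaths_start (hcf : c < f) (hfd : f ≤ d) :
    RatioAntitone (fun γ => #{T ∈ boundedPaths lo hi c d γ δ | f ∈ T})
      (fun γ => #{T ∈ boundedPaths lo hi c d γ δ | f ∉ T}) := by
  have hf : f - 1 + 1 = f := by omega
  replace hcf := Nat.le_sub_one_of_lt hcf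
  induction hcf using Nat.decreasingInduction with
  | self =>
    have h := fun γ b => card_filter_boundedPaths_first_step (lo := lo) (hi := hi) (γ := γ) (δ := δ)
      (by omega : f - 1 < d) b (fun _ => True) fun _ => Iff.rfl
    simp only [and_true, filter_true, hf] at h
    have h₁ := fun γ => h γ true
    have h₀ := fun γ => h γ false
    simp only [Bool.false_eq_true, iff_false, iff_true, Bool.toNat_true, Bool.toNat_false,
      add_zero] at h₀ h₁
    simp_rw [h₀, h₁]
    exact (isLogConcave_window _).mul (isLogConcave_card_boundedPaths_start hfd)
  | of_succ c hc ih =>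
    have hq : ∀ S : Finset ℕ, f ∈ S ↔ f ∈ ({i ∈ S | c + 1 < i} : Finset ℕ) :=
      fun S => by rw [mem_filter, and_iff_left (by omega)]
    have h₁ := fun γ => card_filter_boundedPaths_eq_add (lo := lo) (hi := hi) (γ := γ) (δ := δ)
      (by omega : c < d) (f ∈ ·) hq
    have h₀ := fun γ => card_filter_boundedPaths_eq_add (lo := lo) (hi := hi) (γ := γ) (δ := δ)
      (by omega : c < d) (f ∉ ·) fun S => (hq S).not
    simp_rw [h₁, h₀]
    exact ((RatioAntitone.refl _).mul ih).add_comp_succ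

lemma card_filter_boundedPaths_mem_mem (hce : c ≤ e) (hef : e < f) (hfd : f ≤ d)
    (b₁ b₂ : Bool) :
    #{S ∈ boundedPaths lo hi c d γ δ | (e ∈ S ↔ b₁) ∧ (f ∈ S ↔ b₂)} =
      ∑ β ∈ range (δ + 1), #{T ∈ boundedPaths lo hi c e γ β | (e ∈ T ↔ b₁)} *
        #{T ∈ boundedPaths lo hi e d β δ | (f ∈ T ↔ b₂)} := by
  have hsplit : {S ∈ boundedPaths lo hi c d γ δ | (e ∈ S ↔ b₁) ∧ (f ∈ S ↔ b₂)} =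
      {S ∈ boundedPaths lo hi c d γ δ | (e ∈ ({i ∈ S | i ≤ e} : Finset ℕ) ↔ b₁) ∧
        (f ∈ ({i ∈ S | e < i} : Finset ℕ) ↔ b₂)} :=
    filter_congr fun S _ => by rw [mem_filter, mem_filter, and_iff_left le_rfl, and_iff_left hef]
  rw [hsplit]
  exact card_filter_boundedPaths_eq_sum hce (hef.le.trans hfd) (fun T => e ∈ T ↔ b₁)
    (fun T => f ∈ T ↔ b₂) fun β hβ _ => mem_range.2 (by omega)

theorem card_filter_boundedPaths_four_point_of_lt (hce : c < e) (hef : e < f) (hfd : f ≤ d) :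
    #{S ∈ boundedPaths lo hi c d γ δ | e ∈ S ∧ f ∈ S} *
        #{S ∈ boundedPaths lo hi c d γ δ | e ∉ S ∧ f ∉ S} ≤
      #{S ∈ boundedPaths lo hi c d γ δ | e ∈ S ∧ f ∉ S} *
        #{S ∈ boundedPaths lo hi c d γ δ | e ∉ S ∧ f ∈ S} := by
  have hclass := card_filter_boundedPaths_mem_mem (lo := lo) (hi := hi) (γ := γ) (δ := δ)
    hce.le hef hfd
  have h₁₁ := hclass true true
  have h₀₀ := hclass false false
  have h₁₀ := hclass true false
  have h₀₁ := hclass false true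
  simp only [Bool.false_eq_true, iff_false, iff_true] at h₁₁ h₀₀ h₁₀ h₀₁
  rw [h₁₁, h₀₀, h₁₀, h₀₁]
  exact (RatioAntitone.sum_mul_sum_le
    (ratioAntitone_card_filter_boundedPaths_end (lo := lo) (hi := hi) (γ := γ) hce)
    (ratioAntitone_card_filter_boundedPaths_start (lo := lo) (hi := hi) (δ := δ) hef hfd)
    (range (δ + 1))).trans_eq (mul_comm _ _)

theorem card_filter_boundedPaths_four_point (hce : c < e) (hcf : c < f) (hed : e ≤ d)
    (hfd : f ≤ d) (hef : e ≠ f) :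
    #{S ∈ boundedPaths lo hi c d γ δ | e ∈ S ∧ f ∈ S} *
        #{S ∈ boundedPaths lo hi c d γ δ | e ∉ S ∧ f ∉ S} ≤
      #{S ∈ boundedPaths lo hi c d γ δ | e ∈ S ∧ f ∉ S} *
        #{S ∈ boundedPaths lo hi c d γ δ | f ∈ S ∧ e ∉ S} := by
  rcases hef.lt_or_gt with h | h
  · simpa only [and_comm (a := f ∈ _)] using card_filter_boundedPaths_four_point_of_lt hce h hfd
  · simpa only [and_comm (a := f ∈ _), and_comm (a := f ∉ _),
      mul_comm (#{S ∈ _ | e ∈ S ∧ f ∉ S})] using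
      card_filter_boundedPaths_four_point_of_lt (lo := lo) (hi := hi) (γ := γ) (δ := δ) hcf h hed

end BoundedPaths

lemma latticeFamily_eq_boundedPaths (m r : ℕ) (A B : Finset ℕ) :
    latticeFamily m r A B =
      boundedPaths (fun k => #(A ∩ Icc 1 k)) (fun k => #(B ∩ Icc 1 k)) 0 m 0 r := by
  ext S
  simp only [latticeFamily, mem_boundedPaths, mem_filter, mem_powerset, zero_add, Set.mem_Icc]
  refine and_congr_right fun hS => and_congr_right fun _ => forall₂_congr fun k _ => ?_
  have hSk : S ∩ Icc 1 k = {i ∈ S | i ≤ k} := by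
    ext i
    simp only [mem_inter, mem_filter, mem_Icc, and_congr_right_iff]
    exact fun hiS => and_iff_right (mem_Icc.1 (hS hiS)).1
  rw [hSk]

theorem latticeFamily_four_point_inequality_general
    (m r : ℕ)
    (A B : Finset ℕ)
    (e f : ℕ) (he : e ∈ Finset.Icc 1 m) (hf : f ∈ Finset.Icc 1 m) (hef : e ≠ f) :
    ((latticeFamily m r A B).filter (fun S => e ∈ S ∧ f ∈ S)).card *
      ((latticeFamily m r A B).filter (fun S => e ∉ S ∧ f ∉ S)).card ≤
    ((latticeFamily m r A B).filter (fun S => e ∈ S ∧ f ∉ S)).card *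
      ((latticeFamily m r A B).filter (fun S => f ∈ S ∧ e ∉ S)).card := by
  rw [mem_Icc] at he hf
  rw [latticeFamily_eq_boundedPaths]
  exact card_filter_boundedPaths_four_point he.1 hf.1 he.2 hf.2 hef

/-- For a lattice path matroid, `|L_{ef}| · |L^{ef}| ≤ |L_e^f| · |L_f^e|`. -/
theorem latticeFamily_four_point_inequality
    (m r : ℕ) (hm : 1 ≤ m) (hr : r ≤ m)
    (A B : Finset ℕ) (hA : A ⊆ Finset.Icc 1 m) (hB : B ⊆ Finset.Icc 1 m)
    (hAcard : A.card = r) (hBcard : B.card = r)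
    (hAB : ∀ k ∈ Finset.Icc 1 m,
      (A ∩ Finset.Icc 1 k).card ≤ (B ∩ Finset.Icc 1 k).card)
    (e f : ℕ) (he : e ∈ Finset.Icc 1 m) (hf : f ∈ Finset.Icc 1 m) (hef : e ≠ f) :
    ((latticeFamily m r A B).filter (fun S => e ∈ S ∧ f ∈ S)).card *
      ((latticeFamily m r A B).filter (fun S => e ∉ S ∧ f ∉ S)).card ≤
    ((latticeFamily m r A B).filter (fun S => e ∈ S ∧ f ∉ S)).card *
      ((latticeFamily m r A B).filter (fun S => f ∈ S ∧ e ∉ S)).card :=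
  latticeFamily_four_point_inequality_general m r A B e f he hf hef
end

section
/- Lattice path matroids are balanced: for every lattice path family L = L[S_A, S_B] on ground set {1,…,m}, every pair of disjoint subsets I, J ⊆ {1,…,m}, and every pair of distinct elements e, f ∈ {1,…,m} \ (I ∪ J), the subfamily L' = {S ∈ L : I ⊆ S and S ∩ J = ∅} (the bases of the minor of L[A,B] obtained by contracting I and deleting J) satisfies |L'_{ef}| · |L'^{ef}| ≤ |L'_e^f| · |L'_f^e|, and equivalently |L'_e| · |L'_f| ≥ |L'| · |L'_{ef}|. -/
open scoped Classical

/-!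
Fix `e < f` and cut the ground set just before `f`. A basis of the minor is a path through the
windows of `L[A, B]`; it is a prefix path on `[1, f)` followed by a suffix path on `[f, m]` that
meet at some height `z`, so each of the four counts in the inequality is a sum over `z` of
(prefix count) * (suffix count). Building paths one step at a time shows that the number of
window-constrained paths is log-concave in its end height and in its start height. Hence the
ratio of prefixes through `e` to prefixes avoiding `e` increases with `z`, the corresponding
ratio for suffixes and `f` decreases, and the four functions theorem on the chain `ℤ` gives the
inequality. The second inequality is the first one rearranged.
-/

open Finset

namespace LatticePath

def RatioMonotone (F G : ℤ → ℕ) : Prop :=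
  ∀ ⦃z z' : ℤ⦄, z ≤ z' → F z * G z' ≤ F z' * G z

/-- Log-concavity together with the absence of internal zeros. -/
def LogConcave (p : ℤ → ℕ) : Prop :=
  RatioMonotone (fun z => p (z - 1)) p

namespace RatioMonotone

variable {F G c d : ℤ → ℕ}

theorem refl (F : ℤ → ℕ) : RatioMonotone F F :=
  fun _ _ _ => (mul_comm _ _).le

theorem mul (hcd : RatioMonotone c d) (hFG : RatioMonotone F G) :
    RatioMonotone (fun z => c z * F z) (fun z => d z * G z) := fun z z' hz =>
  calc c z * F z * (d z' * G z') = c z * d z' * (F z * G z') := by ring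
    _ ≤ c z' * d z * (F z' * G z) := Nat.mul_le_mul (hcd hz) (hFG hz)
    _ = c z' * F z' * (d z * G z) := by ring

theorem const_mul (α β : ℕ) (h : RatioMonotone F G) :
    RatioMonotone (fun z => α * F z) (fun z => β * G z) :=
  mul (c := fun _ => α) (d := fun _ => β) (fun _ _ _ => le_rfl) h

theorem add_sub_one (α β : ℕ) (h : RatioMonotone F G) :
    RatioMonotone (fun z => α * F z + β * F (z - 1)) (fun z => α * G z + β * G (z - 1)) := by
  intro z z' hz
  rcases hz.eq_or_lt with rfl | hz
  · exact le_of_eq (by ring)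
  have h₁ := h (z := z) (z' := z') hz.le
  have h₂ := h (z := z - 1) (z' := z' - 1) (by omega)
  have h₃ := h (z := z) (z' := z' - 1) (by omega)
  have h₄ := h (z := z - 1) (z' := z') (by omega)
  calc (α * F z + β * F (z - 1)) * (α * G z' + β * G (z' - 1))
      = α * α * (F z * G z') + α * β * (F z * G (z' - 1)) + α * β * (F (z - 1) * G z')
        + β * β * (F (z - 1) * G (z' - 1)) := by ring
    _ ≤ α * α * (F z' * G z) + α * β * (F (z' - 1) * G z) + α * β * (F z' * G (z - 1))
        + β * β * (F (z' - 1) * G (z - 1)) := by gcongr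
    _ = (α * F z' + β * F (z' - 1)) * (α * G z + β * G (z - 1)) := by ring

open scoped FinsetFamily in
theorem sum_mul_sum_le {R₀ R₁ : ℤ → ℕ} (hFG : RatioMonotone F G) (hR : RatioMonotone R₀ R₁)
    (s : Finset ℤ) :
    (∑ z ∈ s, F z * R₁ z) * ∑ z ∈ s, G z * R₀ z ≤
      (∑ z ∈ s, F z * R₀ z) * ∑ z ∈ s, G z * R₁ z := by
  have key : ∀ z z', F z * R₁ z * (G z' * R₀ z') ≤
      G (z ⊓ z') * R₁ (z ⊓ z') * (F (z ⊔ z') * R₀ (z ⊔ z')) := by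
    intro z z'
    rcases le_total z z' with h | h
    · rw [inf_of_le_left h, sup_of_le_right h]
      calc F z * R₁ z * (G z' * R₀ z') = F z * G z' * (R₁ z * R₀ z') := by ring
        _ ≤ F z' * G z * (R₁ z * R₀ z') := Nat.mul_le_mul_right _ (hFG h)
        _ = G z * R₁ z * (F z' * R₀ z') := by ring
    · rw [inf_of_le_right h, sup_of_le_left h]
      calc F z * R₁ z * (G z' * R₀ z') = F z * G z' * (R₀ z' * R₁ z) := by ring
        _ ≤ F z * G z' * (R₀ z * R₁ z') := Nat.mul_le_mul_left _ (hR h)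
        _ = G z' * R₁ z' * (F z * R₀ z) := by ring
  have hinf : s ⊼ s = s := infs_self.2 (LinearOrder.infClosed _)
  have hsup : s ⊻ s = s := sups_eq_self.2 (LinearOrder.supClosed _)
  simpa [hinf, hsup, mul_comm] using
    four_functions_theorem (fun z => F z * R₁ z) (fun z => G z * R₀ z)
      (fun z => G z * R₁ z) (fun z => F z * R₀ z) (fun _ => Nat.zero_le _) (fun _ => Nat.zero_le _)
      (fun _ => Nat.zero_le _) (fun _ => Nat.zero_le _) key s s

end RatioMonotone

namespace LogConcave

variable {p q : ℤ → ℕ}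

theorem mul (hq : LogConcave q) (hp : LogConcave p) : LogConcave (fun z => q z * p z) :=
  RatioMonotone.mul hq hp

theorem add_sub_one (α β : ℕ) (hp : LogConcave p) :
    LogConcave (fun z => α * p z + β * p (z - 1)) :=
  RatioMonotone.add_sub_one α β hp

theorem ratioMonotone_add_one (hp : LogConcave p) : RatioMonotone p (fun z => p (z + 1)) := by
  intro z z' hz
  simpa using hp (by omega : z + 1 ≤ z' + 1)

theorem add_add_one (α β : ℕ) (hp : LogConcave p) :
    LogConcave (fun z => α * p z + β * p (z + 1)) := by
  intro z z' hz
  have := hp.ratioMonotone_add_one.add_sub_one β α hz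
  simp only [sub_add_cancel] at this ⊢
  linarith

end LogConcave

theorem logConcave_indicator {s : Set ℤ} (hs : s.OrdConnected) : LogConcave (s.indicator 1) := by
  intro z z' hz
  by_cases h : z - 1 ∈ s ∧ z' ∈ s
  · have hz : z ∈ s := hs.out h.1 h.2 ⟨by omega, hz⟩
    have hz' : z' - 1 ∈ s := hs.out h.1 h.2 ⟨by omega, by omega⟩
    simp [Set.indicator_of_mem, h.1, h.2, hz, hz']
  · rcases not_and_or.1 h with h | h <;> simp [Set.indicator_of_notMem h]

theorem filter_le_eq_filter_filter_lt {S : Finset ℕ} {b k : ℕ} (hk : k < b) :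
    {x ∈ S | x ≤ k} = {x ∈ {x ∈ S | x < b} | x ≤ k} := by
  ext x
  simp only [mem_filter]
  grind

theorem card_filter_le_eq_add {S : Finset ℕ} {b k : ℕ} (hk : b ≤ k) :
    #{x ∈ S | x ≤ k} = #{x ∈ S | x < b} + #{x ∈ {x ∈ S | b ≤ x} | x ≤ k} := by
  rw [← card_filter_add_card_filter_not (s := {x ∈ S | x ≤ k}) (fun x => x < b)]
  congr 2 <;> ext x <;> simp only [mem_filter] <;> grind

section Paths

variable (W : ℕ → Set ℤ) (I J : Finset ℕ)

/-- Paths on the steps `[a, b)`, encoded by their sets `V` of up-steps, whose height (`z₀` plus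
the number of up-steps so far) lies in `W k` after step `k` and ends at `z₁`, and which step up at
every `k ∈ I` and at no `k ∈ J`. -/
noncomputable def paths (a b : ℕ) (z₀ z₁ : ℤ) : Finset (Finset ℕ) :=
  (Ico a b).powerset.filter fun V => I ∩ Ico a b ⊆ V ∧ Disjoint V J ∧ z₀ + #V = z₁ ∧
    ∀ k ∈ Ico a b, z₀ + #{x ∈ V | x ≤ k} ∈ W k

variable {W I J} {a b c : ℕ}

theorem subset_Ico_of_mem_paths {V : Finset ℕ} {z₀ z₁ : ℤ} (h : V ∈ paths W I J a b z₀ z₁) :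
    V ⊆ Ico a b :=
  mem_powerset.1 (mem_filter.1 h).1

theorem add_card_eq_of_mem_paths {V : Finset ℕ} {z₀ z₁ : ℤ} (h : V ∈ paths W I J a b z₀ z₁) :
    z₀ + #V = z₁ :=
  (mem_filter.1 h).2.2.2.1

theorem card_paths_eq_zero_of_lt {z₀ z₁ : ℤ} (h : z₁ < z₀) : #(paths W I J a b z₀ z₁) = 0 :=
  card_eq_zero.2 <| eq_empty_of_forall_notMem fun V hV => by
    have := add_card_eq_of_mem_paths hV
    omega

theorem card_paths_self (a : ℕ) (z₀ z₁ : ℤ) :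
    #(paths W I J a a z₀ z₁) = if z₀ = z₁ then 1 else 0 := by
  simp only [paths, Ico_self, powerset_empty, filter_singleton]
  split_ifs <;> simp_all

theorem paths_insert_left_of_notMem {e : ℕ} (he : e ∉ Ico a b) :
    paths W (insert e I) J a b = paths W I J a b := by
  funext z₀ z₁
  simp only [paths, insert_inter_of_notMem he]

theorem paths_insert_right_of_notMem {e : ℕ} (he : e ∉ Ico a b) :
    paths W I (insert e J) a b = paths W I J a b := by
  funext z₀ z₁
  refine filter_congr fun V hV => ?_
  have heV : e ∉ V := fun h => he (mem_powerset.1 hV h)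
  simp [disjoint_insert_right, heV]

theorem mem_paths_append (hab : a ≤ b) (hbc : b ≤ c) (S : Finset ℕ) (z₀ z₂ : ℤ) :
    S ∈ paths W I J a c z₀ z₂ ↔
      {x ∈ S | x < b} ∈ paths W I J a b z₀ (z₀ + #{x ∈ S | x < b}) ∧
      {x ∈ S | b ≤ x} ∈ paths W I J b c (z₀ + #{x ∈ S | x < b}) z₂ := by
  set U := {x ∈ S | x < b}
  set V := {x ∈ S | b ≤ x}
  have hcard : #S = #U + #V := by
    simpa [U, V] using (card_filter_add_card_filter_not (s := S) (fun x => x < b)).symm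
  have hlow : ∀ k < b, {x ∈ S | x ≤ k} = {x ∈ U | x ≤ k} := fun k => filter_le_eq_filter_filter_lt
  have hhigh : ∀ k, b ≤ k → #{x ∈ S | x ≤ k} = #U + #{x ∈ V | x ≤ k} :=
    fun k => card_filter_le_eq_add
  have hsub : S ⊆ Ico a c ↔ U ⊆ Ico a b ∧ V ⊆ Ico b c := by
    simp only [subset_iff, U, V, mem_filter, mem_Ico]
    grind
  have hI : I ∩ Ico a c ⊆ S ↔ I ∩ Ico a b ⊆ U ∧ I ∩ Ico b c ⊆ V := by
    simp only [subset_iff, U, V, mem_filter, mem_inter, mem_Ico]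
    grind
  have hJ : Disjoint S J ↔ Disjoint U J ∧ Disjoint V J := by
    rw [← disjoint_union_left]
    simp only [U, V, ← not_lt, filter_union_filter_not_eq]
  have hW : (∀ k ∈ Ico a c, z₀ + #{x ∈ S | x ≤ k} ∈ W k) ↔
      (∀ k ∈ Ico a b, z₀ + #{x ∈ U | x ≤ k} ∈ W k) ∧
      ∀ k ∈ Ico b c, z₀ + #U + #{x ∈ V | x ≤ k} ∈ W k := by
    refine ⟨fun h => ⟨fun k hk => ?_, fun k hk => ?_⟩, fun h k hk => ?_⟩
    · rw [mem_Ico] at hk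
      rw [← hlow k hk.2]
      exact h k (mem_Ico.2 ⟨hk.1, by omega⟩)
    · rw [mem_Ico] at hk
      rw [add_assoc, ← Nat.cast_add, ← hhigh k hk.1]
      exact h k (mem_Ico.2 ⟨by omega, hk.2⟩)
    · rw [mem_Ico] at hk
      by_cases hkb : k < b
      · rw [hlow k hkb]; exact h.1 k (mem_Ico.2 ⟨hk.1, hkb⟩)
      · rw [hhigh k (by omega), Nat.cast_add, ← add_assoc]
        exact h.2 k (mem_Ico.2 ⟨by omega, hk.2⟩)
  simp only [paths, mem_filter, mem_powerset, hsub, hI, hJ, hW, hcard]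
  push_cast
  constructor
  · rintro ⟨⟨hU, hV⟩, ⟨hIU, hIV⟩, ⟨hJU, hJV⟩, hz, hWU, hWV⟩
    exact ⟨⟨hU, hIU, hJU, trivial, hWU⟩, hV, hIV, hJV, by omega, hWV⟩
  · rintro ⟨⟨hU, hIU, hJU, -, hWU⟩, hV, hIV, hJV, hz, hWV⟩
    exact ⟨⟨hU, hV⟩, ⟨hIU, hIV⟩, ⟨hJU, hJV⟩, by omega, hWU, hWV⟩

theorem filter_union_of_mem_paths {U V : Finset ℕ} {y₀ y₁ y₂ y₃ : ℤ}
    (hU : U ∈ paths W I J a b y₀ y₁) (hV : V ∈ paths W I J b c y₂ y₃) :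
    {x ∈ U ∪ V | x < b} = U ∧ {x ∈ U ∪ V | b ≤ x} = V := by
  have hUb : ∀ x ∈ U, x < b := fun x hx => (mem_Ico.1 (subset_Ico_of_mem_paths hU hx)).2
  have hVb : ∀ x ∈ V, b ≤ x := fun x hx => (mem_Ico.1 (subset_Ico_of_mem_paths hV hx)).1
  rw [filter_union, filter_union, filter_true_of_mem hUb, filter_true_of_mem hVb,
    filter_false_of_mem fun x hx => not_lt.2 (hVb x hx),
    filter_false_of_mem fun x hx => not_le.2 (hUb x hx), union_empty, empty_union]
  exact ⟨rfl, rfl⟩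

theorem card_paths_append (hab : a ≤ b) (hbc : b ≤ c) (z₀ z₂ : ℤ) :
    #(paths W I J a c z₀ z₂) =
      ∑ y ∈ Icc z₀ z₂, #(paths W I J a b z₀ y) * #(paths W I J b c y z₂) := by
  simp_rw [← card_product]
  rw [← card_sigma]
  refine card_nbij' (fun S => ⟨z₀ + #{x ∈ S | x < b}, {x ∈ S | x < b}, {x ∈ S | b ≤ x}⟩)
    (fun p => p.2.1 ∪ p.2.2) ?_ ?_ ?_ ?_
  · intro S hS
    have h := (mem_paths_append hab hbc S z₀ z₂).1 hS
    have := add_card_eq_of_mem_paths h.2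
    simp only [mem_coe, mem_sigma, mem_product, mem_Icc]
    exact ⟨⟨by omega, by omega⟩, h⟩
  · rintro ⟨y, U, V⟩ h
    simp only [mem_coe, mem_sigma, mem_product] at h
    obtain ⟨hU', hV'⟩ := filter_union_of_mem_paths h.2.1 h.2.2
    rw [mem_coe, mem_paths_append hab hbc, hU', hV', add_card_eq_of_mem_paths h.2.1]
    exact h.2
  · intro S _
    simp only [← not_lt, filter_union_filter_not_eq]
  · rintro ⟨y, U, V⟩ h
    simp only [mem_coe, mem_sigma, mem_product] at h
    obtain ⟨hU', hV'⟩ := filter_union_of_mem_paths h.2.1 h.2.2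
    simp only [hU', hV', add_card_eq_of_mem_paths h.2.1]

theorem card_paths_step (k : ℕ) (y z : ℤ) :
    #(paths W I J k (k + 1) y z) = (W k).indicator 1 z *
      ((if k ∈ I then 0 else 1) * (if y = z then 1 else 0) +
        (if k ∈ J then 0 else 1) * (if y + 1 = z then 1 else 0)) := by
  have hne : (∅ : Finset ℕ) ≠ {k} := (singleton_nonempty k).ne_empty.symm
  have hpow : ({k} : Finset ℕ).powerset = {∅, {k}} := by ext; simp [subset_singleton_iff]
  rw [paths, Nat.Ico_succ_singleton, hpow, card_filter, sum_pair hne]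
  by_cases hz : z ∈ W k <;> by_cases hI : k ∈ I <;> by_cases hJ : k ∈ J <;>
    simp [hz, hI, hJ, filter_singleton] <;> grind

theorem card_paths_snoc (hab : a ≤ b) (z₀ z : ℤ) :
    #(paths W I J a (b + 1) z₀ z) = (W b).indicator 1 z *
      ((if b ∈ I then 0 else 1) * #(paths W I J a b z₀ z) +
        (if b ∈ J then 0 else 1) * #(paths W I J a b z₀ (z - 1))) := by
  rw [card_paths_append hab b.le_succ]
  simp only [card_paths_step, ← eq_sub_iff_add_eq, mul_add, mul_ite, mul_one, mul_zero,
    sum_add_distrib, sum_ite_eq', mem_Icc]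
  have hzero : ∀ w < z₀, #(paths W I J a b z₀ w) = 0 := fun w => card_paths_eq_zero_of_lt
  split_ifs <;> grind

theorem card_paths_cons (hab : a < b) (z z₁ : ℤ) :
    #(paths W I J a b z z₁) =
      (if a ∈ I then 0 else 1) * ((W a).indicator 1 z * #(paths W I J (a + 1) b z z₁)) +
        (if a ∈ J then 0 else 1) *
          ((W a).indicator 1 (z + 1) * #(paths W I J (a + 1) b (z + 1) z₁)) := by
  rw [card_paths_append a.le_succ hab]
  simp only [card_paths_step, mul_add, add_mul, mul_ite, ite_mul, mul_one, mul_zero, zero_mul,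
    sum_add_distrib, sum_ite_eq, mem_Icc]
  have hzero : ∀ w, z₁ < w → #(paths W I J (a + 1) b w z₁) = 0 := fun w => card_paths_eq_zero_of_lt
  split_ifs <;> grind

theorem logConcave_card_paths_end (hW : ∀ k, (W k).OrdConnected) (z₀ : ℤ) (hab : a ≤ b) :
    LogConcave fun z => #(paths W I J a b z₀ z) := by
  induction b, hab using Nat.le_induction with
  | base =>
    convert logConcave_indicator (Set.ordConnected_singleton (a := z₀)) using 2 with z
    simp [card_paths_self, Set.indicator_apply, eq_comm]
  | succ b hab ih =>
    simp only [card_paths_snoc hab]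
    exact (logConcave_indicator (hW b)).mul (ih.add_sub_one _ _)

theorem logConcave_card_paths_start (hW : ∀ k, (W k).OrdConnected) (z₁ : ℤ) (hab : a ≤ b) :
    LogConcave fun z => #(paths W I J a b z z₁) := by
  induction hab using Nat.decreasingInduction with
  | self =>
    convert logConcave_indicator (Set.ordConnected_singleton (a := z₁)) using 2 with z
    simp [card_paths_self, Set.indicator_apply]
  | of_succ a hab ih =>
    simp only [card_paths_cons hab]
    exact ((logConcave_indicator (hW a)).mul ih).add_add_one _ _

theorem ratioMonotone_card_paths_insert_end (hW : ∀ k, (W k).OrdConnected) {e : ℕ} (hae : a ≤ e)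
    (z₀ : ℤ) (heb : e < b) :
    RatioMonotone (fun z => #(paths W (insert e I) J a b z₀ z))
      (fun z => #(paths W I (insert e J) a b z₀ z)) := by
  induction b, heb using Nat.le_induction with
  | base =>
    have he : e ∉ Ico a e := by simp
    simp only [card_paths_snoc hae, mem_insert_self, if_true, zero_mul, zero_add, add_zero,
      paths_insert_left_of_notMem he, paths_insert_right_of_notMem he]
    exact (RatioMonotone.refl _).mul ((logConcave_card_paths_end hW z₀ hae).const_mul _ _)
  | succ b heb ih =>
    have hbe : b ≠ e := by omega
    simp only [card_paths_snoc (by omega : a ≤ b), mem_insert, hbe, false_or]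
    exact (RatioMonotone.refl _).mul (ih.add_sub_one _ _)

theorem ratioMonotone_card_paths_insert_start (hW : ∀ k, (W k).OrdConnected) {f : ℕ} (hfb : f < b)
    (z₁ : ℤ) :
    RatioMonotone (fun z => #(paths W I (insert f J) f b z z₁))
      (fun z => #(paths W (insert f I) J f b z z₁)) := by
  have hf : f ∉ Ico (f + 1) b := by simp
  simp only [card_paths_cons hfb, mem_insert_self, if_true, zero_mul, zero_add, add_zero,
    paths_insert_left_of_notMem hf, paths_insert_right_of_notMem hf]
  exact ((logConcave_indicator (hW f)).mul
    (logConcave_card_paths_start hW z₁ hfb)).ratioMonotone_add_one.const_mul _ _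

theorem card_paths_mul_card_paths_le (hW : ∀ k, (W k).OrdConnected) {e f : ℕ} (hae : a ≤ e)
    (hef : e < f) (hfb : f < b) (z₀ z₁ : ℤ) :
    #(paths W (insert e (insert f I)) J a b z₀ z₁) *
        #(paths W I (insert e (insert f J)) a b z₀ z₁) ≤
      #(paths W (insert e I) (insert f J) a b z₀ z₁) *
        #(paths W (insert f I) (insert e J) a b z₀ z₁) := by
  have he : e ∉ Ico f b := by simp; omega
  have hf : f ∉ Ico a f := by simp
  simp only [card_paths_append (hae.trans hef.le) hfb.le, paths_insert_left_of_notMem he,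
    paths_insert_right_of_notMem he]
  rw [insert_comm e f I, insert_comm e f J]
  simp only [paths_insert_left_of_notMem hf, paths_insert_right_of_notMem hf]
  exact (ratioMonotone_card_paths_insert_end hW hae z₀ hef).sum_mul_sum_le
    (ratioMonotone_card_paths_insert_start hW hfb z₁) _

theorem card_paths_mul_card_paths_le_of_ne (hW : ∀ k, (W k).OrdConnected) {e f : ℕ}
    (he : e ∈ Ico a b) (hf : f ∈ Ico a b) (hef : e ≠ f) (z₀ z₁ : ℤ) :
    #(paths W (insert e (insert f I)) J a b z₀ z₁) *
        #(paths W I (insert e (insert f J)) a b z₀ z₁) ≤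
      #(paths W (insert e I) (insert f J) a b z₀ z₁) *
        #(paths W (insert f I) (insert e J) a b z₀ z₁) := by
  rcases hef.lt_or_gt with hlt | hlt
  · exact card_paths_mul_card_paths_le hW (mem_Ico.1 he).1 hlt (mem_Ico.1 hf).2 z₀ z₁
  · rw [insert_comm e f I, insert_comm e f J, mul_comm (#(paths W (insert e I) _ _ _ _ _))]
    exact card_paths_mul_card_paths_le hW (mem_Ico.1 hf).1 hlt (mem_Ico.1 he).2 z₀ z₁

end Paths

theorem card_mul_card_filter_and_le {α : Type*} {s : Finset α} {p q : α → Prop}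
    [DecidablePred p] [DecidablePred q]
    (h : #{x ∈ s | p x ∧ q x} * #{x ∈ s | ¬p x ∧ ¬q x} ≤
      #{x ∈ s | p x ∧ ¬q x} * #{x ∈ s | q x ∧ ¬p x}) :
    #s * #{x ∈ s | p x ∧ q x} ≤ #{x ∈ s | p x} * #{x ∈ s | q x} := by
  have hs := card_filter_add_card_filter_not (s := s) p
  have hp := card_filter_add_card_filter_not (s := {x ∈ s | p x}) q
  have hq := card_filter_add_card_filter_not (s := {x ∈ s | q x}) p
  have hnp := card_filter_add_card_filter_not (s := {x ∈ s | ¬p x}) q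
  have hqp : {x ∈ s | q x ∧ p x} = {x ∈ s | p x ∧ q x} := filter_congr fun _ _ => and_comm
  have hnpq : {x ∈ s | ¬p x ∧ q x} = {x ∈ s | q x ∧ ¬p x} := filter_congr fun _ _ => and_comm
  simp only [filter_filter, hqp, hnpq] at hp hq hnp
  rw [← hs, ← hp, ← hq, ← hnp]
  nlinarith [h]

def window (A B : Finset ℕ) (k : ℕ) : Set ℤ :=
  Set.Icc #(A ∩ Icc 1 k) #(B ∩ Icc 1 k)

theorem filter_latticeFamily_eq_paths {m r : ℕ} {A B I : Finset ℕ} (J : Finset ℕ)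
    (hI : I ⊆ Icc 1 m) :
    (latticeFamily m r A B).filter (fun S => I ⊆ S ∧ Disjoint S J) =
      paths (window A B) I J 1 (m + 1) 0 r := by
  ext S
  simp only [latticeFamily, paths, mem_filter, mem_powerset, Ico_add_one_right_eq_Icc]
  rw [inter_eq_left.2 hI]
  by_cases hS : S ⊆ Icc 1 m
  · have hk : ∀ k, {x ∈ S | x ≤ k} = S ∩ Icc 1 k := fun k => by
      ext x
      have := fun h : x ∈ S => mem_Icc.1 (hS h)
      simp only [mem_filter, mem_inter, mem_Icc]
      grind
    simp only [hS, hk, window, zero_add, Nat.cast_inj, Set.mem_Icc, Nat.cast_le, true_and]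
    tauto
  · simp [hS]

theorem filter_filter_latticeFamily_eq_paths {m r : ℕ} {A B I J I' J' : Finset ℕ}
    {p : Finset ℕ → Prop} [DecidablePred p] (hI' : I' ⊆ Icc 1 m)
    (hp : ∀ S, (I ⊆ S ∧ Disjoint S J) ∧ p S ↔ I' ⊆ S ∧ Disjoint S J') :
    ((latticeFamily m r A B).filter (fun S => I ⊆ S ∧ Disjoint S J)).filter p =
      paths (window A B) I' J' 1 (m + 1) 0 r := by
  rw [filter_filter, filter_congr fun S _ => hp S, filter_latticeFamily_eq_paths J' hI']

end LatticePath

open LatticePath in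
theorem latticeFamily_balanced_general
    (m r : ℕ)
    (A B : Finset ℕ)
    (I J : Finset ℕ) (hI : I ⊆ Finset.Icc 1 m)
    (e f : ℕ) (he : e ∈ Finset.Icc 1 m \ (I ∪ J)) (hf : f ∈ Finset.Icc 1 m \ (I ∪ J))
    (hef : e ≠ f) :
    (((latticeFamily m r A B).filter (fun S => I ⊆ S ∧ Disjoint S J)).filter
        (fun S => e ∈ S ∧ f ∈ S)).card *
      (((latticeFamily m r A B).filter (fun S => I ⊆ S ∧ Disjoint S J)).filter
        (fun S => e ∉ S ∧ f ∉ S)).card ≤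
    (((latticeFamily m r A B).filter (fun S => I ⊆ S ∧ Disjoint S J)).filter
        (fun S => e ∈ S ∧ f ∉ S)).card *
      (((latticeFamily m r A B).filter (fun S => I ⊆ S ∧ Disjoint S J)).filter
        (fun S => f ∈ S ∧ e ∉ S)).card ∧
    (((latticeFamily m r A B).filter (fun S => I ⊆ S ∧ Disjoint S J)).filter
        (fun S => e ∈ S)).card *
      (((latticeFamily m r A B).filter (fun S => I ⊆ S ∧ Disjoint S J)).filter
        (fun S => f ∈ S)).card ≥
    ((latticeFamily m r A B).filter (fun S => I ⊆ S ∧ Disjoint S J)).card *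
      (((latticeFamily m r A B).filter (fun S => I ⊆ S ∧ Disjoint S J)).filter
        (fun S => e ∈ S ∧ f ∈ S)).card := by
  have he' := (mem_sdiff.1 he).1
  have hf' := (mem_sdiff.1 hf).1
  refine (fun h => ⟨h, card_mul_card_filter_and_le h⟩) ?_
  rw [filter_filter_latticeFamily_eq_paths (J' := J) (insert_subset he' (insert_subset hf' hI)),
    filter_filter_latticeFamily_eq_paths (J' := insert e (insert f J)) hI,
    filter_filter_latticeFamily_eq_paths (J' := insert f J) (insert_subset he' hI),
    filter_filter_latticeFamily_eq_paths (J' := insert e J) (insert_subset hf' hI)]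
  · exact card_paths_mul_card_paths_le_of_ne (fun k => Set.ordConnected_Icc)
      (by rwa [Ico_add_one_right_eq_Icc]) (by rwa [Ico_add_one_right_eq_Icc]) hef 0 r
  all_goals intro S; simp only [insert_subset_iff, disjoint_insert_right]; tauto

/-- Lattice path matroids are balanced: every minor (contract `I`, delete `J`)
is negatively correlated, in both equivalent forms. -/
theorem latticeFamily_balanced
    (m r : ℕ) (hm : 1 ≤ m) (hr : r ≤ m)
    (A B : Finset ℕ) (hA : A ⊆ Finset.Icc 1 m) (hB : B ⊆ Finset.Icc 1 m)
    (hAcard : A.card = r) (hBcard : B.card = r)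
    (hAB : ∀ k ∈ Finset.Icc 1 m,
      (A ∩ Finset.Icc 1 k).card ≤ (B ∩ Finset.Icc 1 k).card)
    (I J : Finset ℕ) (hI : I ⊆ Finset.Icc 1 m) (hJ : J ⊆ Finset.Icc 1 m)
    (hIJ : Disjoint I J)
    (e f : ℕ) (he : e ∈ Finset.Icc 1 m \ (I ∪ J)) (hf : f ∈ Finset.Icc 1 m \ (I ∪ J))
    (hef : e ≠ f) :
    (((latticeFamily m r A B).filter (fun S => I ⊆ S ∧ Disjoint S J)).filter
        (fun S => e ∈ S ∧ f ∈ S)).card *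
      (((latticeFamily m r A B).filter (fun S => I ⊆ S ∧ Disjoint S J)).filter
        (fun S => e ∉ S ∧ f ∉ S)).card ≤
    (((latticeFamily m r A B).filter (fun S => I ⊆ S ∧ Disjoint S J)).filter
        (fun S => e ∈ S ∧ f ∉ S)).card *
      (((latticeFamily m r A B).filter (fun S => I ⊆ S ∧ Disjoint S J)).filter
        (fun S => f ∈ S ∧ e ∉ S)).card ∧
    (((latticeFamily m r A B).filter (fun S => I ⊆ S ∧ Disjoint S J)).filter
        (fun S => e ∈ S)).card *
      (((latticeFamily m r A B).filter (fun S => I ⊆ S ∧ Disjoint S J)).filter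
        (fun S => f ∈ S)).card ≥
    ((latticeFamily m r A B).filter (fun S => I ⊆ S ∧ Disjoint S J)).card *
      (((latticeFamily m r A B).filter (fun S => I ⊆ S ∧ Disjoint S J)).filter
        (fun S => e ∈ S ∧ f ∈ S)).card :=
  latticeFamily_balanced_general m r A B I J hI e f he hf hef
end

section
/- For every n ≥ 1 and every k with 1 ≤ k ≤ n, the number of Dyck paths of length 2n having exactly k down-steps at even indices equals the Narayana number N(n,k); that is, |{S ∈ 𝓓(n) : the number of even indices in {1,…,2n} \ S equals k}| = (1/n)·binom(n,k)·binom(n,k−1). -/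
open scoped Classical

/-- The set of Dyck paths of length `2n`, identified with their up-step sets:
`n`-element subsets `S` of `{1,…,2n}` with `2·|S ∩ {1,…,k}| ≥ k` for all `k`. -/
noncomputable def dyck (n : ℕ) : Finset (Finset ℕ) :=
  (Finset.Icc 1 (2 * n)).powerset.filter fun S =>
    S.card = n ∧ ∀ k ∈ Finset.Icc 1 (2 * n), k ≤ 2 * (S ∩ Finset.Icc 1 k).card

/-!
A Dyck path of semilength `m + 1` starts with an up-step and ends with a down-step; in between,
group its steps into the pairs `(2j+2, 2j+3)`, `j < m`. The path is determined by the set `X` of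
`j` with `2j+3` an up-step and the set `Y` of `j` with `2j+2` a down-step. Counting up-steps up to
position `2t+1` shows that the Dyck condition says exactly that every segment `[0, t)`, `t ≤ m`,
contains at least as many elements of `X` as of `Y`; the path has `m + 1` up-steps iff
`|X| = |Y|`, and it has `|Y| + 1` down-steps at even positions.

Such "ballot pairs" are counted by splitting off the top element `m` of `X` and `Y`, which gives a
four-term Pascal recursion, solved by
`#{(X, Y) : |X| = a, |Y| = b + 1} = C(m,a) C(m,b+1) - C(m,a+1) C(m,b)` for `b ≤ a`.
For `a = b + 1` this difference of products equals `C(m+1,a+1) C(m+1,a) / (m+1)`.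
-/

open Finset

def IsBallot (m : ℕ) (X Y : Finset ℕ) : Prop :=
  ∀ t ≤ m, #(Y.filter (· < t)) ≤ #(X.filter (· < t))

noncomputable def ballotPairs (m a b : ℕ) : Finset (Finset ℕ × Finset ℕ) :=
  ((range m).powerset ×ˢ (range m).powerset).filter
    fun XY => #XY.1 = a ∧ #XY.2 = b ∧ IsBallot m XY.1 XY.2

lemma card_ballotPairs_eq_sum (m a b : ℕ) :
    #(ballotPairs m a b) = ∑ X ∈ (range m).powerset, ∑ Y ∈ (range m).powerset,
      if #X = a ∧ #Y = b ∧ IsBallot m X Y then 1 else 0 := by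
  rw [ballotPairs, card_filter, sum_product]

lemma isBallot_succ_iff {m : ℕ} {X Y : Finset ℕ} :
    IsBallot (m + 1) X Y ↔ IsBallot m X Y ∧ #(Y.filter (· ≤ m)) ≤ #(X.filter (· ≤ m)) := by
  simp only [IsBallot, Nat.le_succ_iff, or_imp, forall_and, forall_eq, Nat.lt_succ_iff]

lemma filter_lt_insert_self {m t : ℕ} (X : Finset ℕ) (ht : t ≤ m) :
    (insert m X).filter (· < t) = X.filter (· < t) := by
  rw [filter_insert, if_neg (by omega)]

lemma isBallot_insert_left {m : ℕ} {X Y : Finset ℕ} :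
    IsBallot m (insert m X) Y ↔ IsBallot m X Y :=
  forall₂_congr fun t ht => by rw [filter_lt_insert_self X ht]

lemma isBallot_insert_right {m : ℕ} {X Y : Finset ℕ} :
    IsBallot m X (insert m Y) ↔ IsBallot m X Y :=
  forall₂_congr fun t ht => by rw [filter_lt_insert_self Y ht]

lemma card_ballotPairs_succ {m a b : ℕ} (h : b ≤ a) :
    #(ballotPairs (m + 1) (a + 1) (b + 1)) = #(ballotPairs m (a + 1) (b + 1)) +
      #(ballotPairs m (a + 1) b) + #(ballotPairs m a (b + 1)) + #(ballotPairs m a b) := by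
  simp only [card_ballotPairs_eq_sum, range_add_one, sum_powerset_insert notMem_range_self,
    sum_add_distrib, ← add_assoc]
  congr 1; congr 1; congr 1
  all_goals refine sum_congr rfl fun X hX => sum_congr rfl fun Y hY => ?_
  all_goals
    rw [mem_powerset] at hX hY
    have hmX : m ∉ X := fun hm => notMem_range_self (hX hm)
    have hmY : m ∉ Y := fun hm => notMem_range_self (hY hm)
    have hX' : X.filter (· ≤ m) = X := filter_true_of_mem fun x hx => (mem_range.1 (hX hx)).le
    have hY' : Y.filter (· ≤ m) = Y := filter_true_of_mem fun y hy => (mem_range.1 (hY hy)).le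
    simp only [isBallot_succ_iff, isBallot_insert_left, isBallot_insert_right, filter_insert,
      le_refl, if_true, hX', hY', card_insert_of_notMem hmX, card_insert_of_notMem hmY]
    grind

lemma card_ballotPairs_zero_right (m a : ℕ) : #(ballotPairs m a 0) = m.choose a := by
  have : ballotPairs m a 0 = (range m).powersetCard a ×ˢ {∅} := by
    ext ⟨X, Y⟩
    simp only [ballotPairs, IsBallot, mem_filter, mem_product, mem_powerset, mem_powersetCard,
      mem_singleton, card_eq_zero]
    constructor
    · rintro ⟨⟨hX, -⟩, ha, hY, -⟩
      exact ⟨⟨hX, ha⟩, hY⟩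
    · rintro ⟨⟨hX, ha⟩, rfl⟩
      simp [hX, ha]
  rw [this, card_product, card_powersetCard, card_range, card_singleton, mul_one]

lemma ballotPairs_eq_empty {m a b : ℕ} (h : a < b) : ballotPairs m a b = ∅ := by
  refine filter_eq_empty_iff.2 fun XY hXY ⟨hX, hY, hball⟩ => ?_
  rw [mem_product, mem_powerset, mem_powerset] at hXY
  have hall : ∀ Z ⊆ range m, Z.filter (· < m) = Z := fun Z hZ =>
    filter_true_of_mem fun z hz => mem_range.1 (hZ hz)
  have := hball m le_rfl
  rw [hall _ hXY.1, hall _ hXY.2] at this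
  omega

theorem card_ballotPairs_add_choose_mul_choose {m a b : ℕ} (h : b ≤ a) :
    #(ballotPairs m a (b + 1)) + m.choose (a + 1) * m.choose b = m.choose a * m.choose (b + 1) := by
  induction m generalizing a b with
  | zero => simp [ballotPairs, filter_singleton]
  | succ m ih =>
    rcases h.eq_or_lt with rfl | hlt
    · rw [ballotPairs_eq_empty (by omega), card_empty, zero_add, mul_comm]
    obtain ⟨a, rfl⟩ : ∃ a', a = a' + 1 := ⟨a - 1, by omega⟩
    rw [card_ballotPairs_succ (by omega)]
    have h1 := ih (a := a + 1) (b := b) (by omega)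
    have h2 := ih (a := a) (b := b) (by omega)
    rcases b with _ | b
    · simp only [card_ballotPairs_zero_right, Nat.choose_succ_succ', Nat.choose_zero_right] at *
      linear_combination h1 + h2
    · have h3 := ih (a := a + 1) (b := b) (by omega)
      have h4 := ih (a := a) (b := b) (by omega)
      simp only [Nat.choose_succ_succ']
      linear_combination h1 + h2 + h3 + h4

theorem succ_mul_card_ballotPairs_self (m j : ℕ) :
    (m + 1) * #(ballotPairs m j j) = (m + 1).choose (j + 1) * (m + 1).choose j := by
  rcases j with _ | i
  · simp [card_ballotPairs_zero_right]
  have h := card_ballotPairs_add_choose_mul_choose (m := m) (a := i + 1) (b := i) (by omega)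
  have p1 := Nat.choose_succ_succ' m i
  have p2 := Nat.choose_succ_succ' m (i + 1)
  have e1 := Nat.add_one_mul_choose_eq m i
  have e2 := Nat.add_one_mul_choose_eq m (i + 1)
  set c₀ := m.choose i
  set c₁ := m.choose (i + 1)
  set c₂ := m.choose (i + 2)
  set A := (m + 1).choose (i + 1)
  set B := (m + 1).choose (i + 2)
  zify at h p1 p2 e1 e2 ⊢
  linear_combination (m + 1) * h + (m + 1) * (c₂ - B) * p1 + (m + 1) * (A - c₁) * p2 - B * e1 + A * e2

lemma card_inter_Icc_add_one (S : Finset ℕ) (k : ℕ) :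
    #(S ∩ Icc 1 (k + 1)) = #(S ∩ Icc 1 k) + if k + 1 ∈ S then 1 else 0 := by
  rw [← insert_Icc_right_eq_Icc_add_one (by omega : 1 ≤ k + 1)]
  split_ifs with hk
  · rw [inter_insert_of_mem hk, card_insert_of_notMem (by simp)]
  · rw [inter_insert_of_notMem hk, add_zero]

lemma card_inter_Icc_two_mul_add_one {S : Finset ℕ} (h1 : 1 ∈ S) (t : ℕ) :
    #(S ∩ Icc 1 (2 * t + 1)) + #((range t).filter fun j => 2 * j + 2 ∉ S) =
      #((range t).filter fun j => 2 * j + 3 ∈ S) + t + 1 := by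
  induction t with
  | zero => simp [h1]
  | succ t ih =>
    rw [show 2 * (t + 1) + 1 = 2 * t + 1 + 1 + 1 by ring, card_inter_Icc_add_one,
      card_inter_Icc_add_one]
    simp only [card_filter, sum_range_succ] at ih ⊢
    split_ifs <;> omega

lemma dyck_condition_iff (S : Finset ℕ) (m : ℕ) :
    (∀ k ∈ Icc 1 (2 * (m + 1)), k ≤ 2 * #(S ∩ Icc 1 k)) ↔
      ∀ t ≤ m, t + 1 ≤ #(S ∩ Icc 1 (2 * t + 1)) := by
  constructor
  · intro h t ht
    have := h (2 * t + 1) (mem_Icc.2 ⟨by omega, by omega⟩)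
    omega
  · intro h k hk
    obtain ⟨hk1, hk2⟩ := mem_Icc.1 hk
    obtain ⟨t, rfl | rfl⟩ := Nat.even_or_odd' k
    · have hodd := h (t - 1) (by omega)
      have hstep := card_inter_Icc_add_one S (2 * (t - 1) + 1)
      rw [show 2 * (t - 1) + 1 + 1 = 2 * t by omega] at hstep
      omega
    · have := h t (by omega)
      omega

noncomputable def oddUps (m : ℕ) (S : Finset ℕ) : Finset ℕ :=
  (range m).filter fun j => 2 * j + 3 ∈ S

noncomputable def evenDowns (m : ℕ) (S : Finset ℕ) : Finset ℕ :=
  (range m).filter fun j => 2 * j + 2 ∉ S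

lemma filter_range_filter_lt {m t : ℕ} (p : ℕ → Prop) [DecidablePred p] (ht : t ≤ m) :
    ((range m).filter p).filter (· < t) = (range t).filter p := by
  ext j
  simp only [mem_filter, mem_range]
  constructor
  · rintro ⟨⟨-, hp⟩, hj⟩; exact ⟨hj, hp⟩
  · rintro ⟨hj, hp⟩; exact ⟨⟨by omega, hp⟩, hj⟩

lemma isBallot_oddUps_evenDowns_iff {m : ℕ} {S : Finset ℕ} (h1 : 1 ∈ S) :
    IsBallot m (oddUps m S) (evenDowns m S) ↔ ∀ t ≤ m, t + 1 ≤ #(S ∩ Icc 1 (2 * t + 1)) := by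
  refine forall₂_congr fun t ht => ?_
  have := card_inter_Icc_two_mul_add_one h1 t
  rw [oddUps, evenDowns, filter_range_filter_lt _ ht, filter_range_filter_lt _ ht]
  omega

lemma card_add_card_evenDowns {m : ℕ} {S : Finset ℕ} (hS : S ⊆ Icc 1 (2 * (m + 1))) (h1 : 1 ∈ S) :
    #S + #(evenDowns m S) = #(oddUps m S) + m + 1 + if 2 * m + 2 ∈ S then 1 else 0 := by
  have hlast := card_inter_Icc_add_one S (2 * m + 1)
  rw [show 2 * m + 1 + 1 = 2 * (m + 1) by ring, inter_eq_left.2 hS] at hlast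
  have := card_inter_Icc_two_mul_add_one h1 m
  rw [hlast, show 2 * (m + 1) = 2 * m + 2 by ring]
  simp only [oddUps, evenDowns]
  omega

lemma card_evenDownSteps {m : ℕ} {S : Finset ℕ} (h : 2 * m + 2 ∉ S) :
    #((Icc 1 (2 * (m + 1)) \ S).filter fun i => Even i) = #(evenDowns m S) + 1 := by
  have : (Icc 1 (2 * (m + 1)) \ S).filter (fun i => Even i) =
      ((range (m + 1)).filter fun j => 2 * j + 2 ∉ S).image (2 * · + 2) := by
    ext x
    simp only [mem_filter, mem_sdiff, mem_Icc, mem_image, mem_range]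
    constructor
    · rintro ⟨⟨⟨hx1, hx2⟩, hxS⟩, r, rfl⟩
      exact ⟨r - 1, ⟨by omega, by rwa [show 2 * (r - 1) + 2 = r + r by omega]⟩, by omega⟩
    · rintro ⟨j, ⟨hj, hjS⟩, rfl⟩
      exact ⟨⟨⟨by omega, by omega⟩, hjS⟩, ⟨j + 1, by ring⟩⟩
  rw [this, card_image_of_injective _ fun a b hab => by simpa using hab, range_add_one,
    filter_insert, if_pos h, card_insert_of_notMem (by simp), evenDowns]

noncomputable def ofBallotPair (m : ℕ) (XY : Finset ℕ × Finset ℕ) : Finset ℕ :=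
  insert 1 (XY.1.image (2 * · + 3) ∪ (range m \ XY.2).image (2 * · + 2))

section ofBallotPair

variable {m : ℕ} {XY : Finset ℕ × Finset ℕ}

lemma two_mul_add_three_mem_ofBallotPair {j : ℕ} : 2 * j + 3 ∈ ofBallotPair m XY ↔ j ∈ XY.1 := by
  simp only [ofBallotPair, mem_insert, mem_union, mem_image, mem_sdiff, mem_range]
  constructor
  · rintro (h | ⟨i, hi, h⟩ | ⟨i, -, h⟩)
    · omega
    · rwa [show j = i by omega]
    · omega
  · exact fun h => Or.inr (Or.inl ⟨j, h, rfl⟩)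

lemma two_mul_add_two_mem_ofBallotPair {j : ℕ} :
    2 * j + 2 ∈ ofBallotPair m XY ↔ j < m ∧ j ∉ XY.2 := by
  simp only [ofBallotPair, mem_insert, mem_union, mem_image, mem_sdiff, mem_range]
  constructor
  · rintro (h | ⟨i, -, h⟩ | ⟨i, hi, h⟩)
    · omega
    · omega
    · rwa [show j = i by omega]
  · exact fun h => Or.inr (Or.inr ⟨j, h, rfl⟩)

lemma oddUps_ofBallotPair (hX : XY.1 ⊆ range m) : oddUps m (ofBallotPair m XY) = XY.1 := by
  ext j
  simp only [oddUps, mem_filter, mem_range, two_mul_add_three_mem_ofBallotPair]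
  exact ⟨And.right, fun h => ⟨mem_range.1 (hX h), h⟩⟩

lemma evenDowns_ofBallotPair (hY : XY.2 ⊆ range m) : evenDowns m (ofBallotPair m XY) = XY.2 := by
  ext j
  simp only [evenDowns, mem_filter, mem_range, two_mul_add_two_mem_ofBallotPair]
  exact ⟨fun h => by tauto, fun h => ⟨mem_range.1 (hY h), by tauto⟩⟩

lemma ofBallotPair_subset (hX : XY.1 ⊆ range m) : ofBallotPair m XY ⊆ Icc 1 (2 * (m + 1)) := by
  simp only [ofBallotPair, insert_subset_iff, union_subset_iff, image_subset_iff, mem_Icc]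
  refine ⟨by omega, fun j hj => ?_, fun j hj => ?_⟩
  · have := mem_range.1 (hX hj); omega
  · have := mem_range.1 (mem_sdiff.1 hj).1; omega

lemma ofBallotPair_oddUps_evenDowns {S : Finset ℕ} (hS : S ⊆ Icc 1 (2 * (m + 1))) (h1 : 1 ∈ S)
    (hlast : 2 * m + 2 ∉ S) : ofBallotPair m (oddUps m S, evenDowns m S) = S := by
  have hmem : ∀ x ∈ S, 1 ≤ x ∧ x ≤ 2 * m + 1 := fun x hx => by
    have hne : x ≠ 2 * m + 2 := fun h => hlast (h ▸ hx)
    have := mem_Icc.1 (hS hx)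
    omega
  ext x
  obtain ⟨j, rfl | rfl⟩ := Nat.even_or_odd' x
  · rcases j with _ | j
    · exact iff_of_false (by simp [ofBallotPair]) fun h => by have := hmem 0 h; omega
    rw [show 2 * (j + 1) = 2 * j + 2 by ring, two_mul_add_two_mem_ofBallotPair]
    simp only [evenDowns, mem_filter, mem_range, not_and, not_not]
    constructor
    · rintro ⟨hj, h⟩; exact h hj
    · intro h; have := hmem _ h; exact ⟨by omega, fun _ => h⟩
  · rcases j with _ | j
    · simp [ofBallotPair, h1]
    rw [show 2 * (j + 1) + 1 = 2 * j + 3 by ring, two_mul_add_three_mem_ofBallotPair]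
    simp only [oddUps, mem_filter, mem_range]
    exact ⟨And.right, fun h => ⟨by have := hmem _ h; omega, h⟩⟩

end ofBallotPair

lemma mem_dyck_succ_iff {m : ℕ} {S : Finset ℕ} :
    S ∈ dyck (m + 1) ↔ S ⊆ Icc 1 (2 * (m + 1)) ∧ 1 ∈ S ∧ 2 * m + 2 ∉ S ∧
      #(oddUps m S) = #(evenDowns m S) ∧ IsBallot m (oddUps m S) (evenDowns m S) := by
  simp only [dyck, mem_filter, mem_powerset]
  rw [dyck_condition_iff]
  constructor
  · rintro ⟨hS, hcard, hball⟩
    have h1 : 1 ∈ S := by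
      by_contra h1
      simpa [h1] using hball 0 m.zero_le
    have hlast : 2 * m + 2 ∉ S := by
      have hstep := card_inter_Icc_add_one S (2 * m + 1)
      rw [show 2 * m + 1 + 1 = 2 * (m + 1) by ring, inter_eq_left.2 hS] at hstep
      have hprefix := hball m le_rfl
      split_ifs at hstep <;> omega
    have := card_add_card_evenDowns hS h1
    rw [if_neg hlast] at this
    exact ⟨hS, h1, hlast, by omega, (isBallot_oddUps_evenDowns_iff h1).2 hball⟩
  · rintro ⟨hS, h1, hlast, hcard, hball⟩
    have := card_add_card_evenDowns hS h1
    rw [if_neg hlast] at this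
    exact ⟨hS, by omega, (isBallot_oddUps_evenDowns_iff h1).1 hball⟩

lemma card_dyck_filter_eq_card_ballotPairs (m j : ℕ) :
    #((dyck (m + 1)).filter fun S =>
        #((Icc 1 (2 * (m + 1)) \ S).filter fun i => Even i) = j + 1) = #(ballotPairs m j j) := by
  refine card_nbij' (fun S => (oddUps m S, evenDowns m S)) (ofBallotPair m) ?_ ?_ ?_ ?_
  · intro S hS
    rw [mem_coe, mem_filter, mem_dyck_succ_iff] at hS
    obtain ⟨⟨-, -, hlast, hcard, hball⟩, hdown⟩ := hS
    rw [card_evenDownSteps hlast] at hdown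
    simp only [mem_coe, ballotPairs, mem_filter, mem_product, mem_powerset]
    exact ⟨⟨filter_subset _ _, filter_subset _ _⟩, by omega, by omega, hball⟩
  · intro XY hXY
    simp only [mem_coe, ballotPairs, mem_filter, mem_product, mem_powerset] at hXY
    obtain ⟨⟨hX, hY⟩, hXc, hYc, hball⟩ := hXY
    have hlast : 2 * m + 2 ∉ ofBallotPair m XY := fun h => by
      simpa using two_mul_add_two_mem_ofBallotPair.1 h
    rw [mem_coe, mem_filter, mem_dyck_succ_iff, card_evenDownSteps hlast, oddUps_ofBallotPair hX,
      evenDowns_ofBallotPair hY]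
    exact ⟨⟨ofBallotPair_subset hX, mem_insert_self _ _, hlast, by omega, hball⟩, by omega⟩
  · intro S hS
    rw [mem_coe, mem_filter, mem_dyck_succ_iff] at hS
    exact ofBallotPair_oddUps_evenDowns hS.1.1 hS.1.2.1 hS.1.2.2.1
  · intro XY hXY
    simp only [mem_coe, ballotPairs, mem_filter, mem_product, mem_powerset] at hXY
    exact Prod.ext (oddUps_ofBallotPair hXY.1.1) (evenDowns_ofBallotPair hXY.1.2)

theorem card_dyck_evenDownSteps_eq_narayana_general (n k : ℕ) (hn : 1 ≤ n)
    (hk1 : 1 ≤ k) :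
    n * ((dyck n).filter (fun S =>
        (((Finset.Icc 1 (2 * n)) \ S).filter (fun i => Even i)).card = k)).card =
      n.choose k * n.choose (k - 1) := by
  obtain ⟨m, rfl⟩ : ∃ m, n = m + 1 := ⟨n - 1, by omega⟩
  obtain ⟨j, rfl⟩ : ∃ j, k = j + 1 := ⟨k - 1, by omega⟩
  rw [card_dyck_filter_eq_card_ballotPairs, succ_mul_card_ballotPairs_self, Nat.add_sub_cancel]

/-- The number of Dyck paths of length `2n` with exactly `k` down-steps at even
indices is the Narayana number `N(n,k) = (1/n)·C(n,k)·C(n,k−1)` (stated with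
both sides multiplied by `n`). -/
theorem card_dyck_evenDownSteps_eq_narayana (n k : ℕ) (hn : 1 ≤ n)
    (hk1 : 1 ≤ k) (hkn : k ≤ n) :
    n * ((dyck n).filter (fun S =>
        (((Finset.Icc 1 (2 * n)) \ S).filter (fun i => Even i)).card = k)).card =
      n.choose k * n.choose (k - 1) :=
  card_dyck_evenDownSteps_eq_narayana_general n k hn hk1
end

section
/- The Narayana distribution has mean (n+1)/2 and variance (n+1)(n−1)/(4(2n−1)); that is, with p(k) = N(n,k)/C_n for 1 ≤ k ≤ n, one has Σ_{k=1}^n k·p(k) = (n+1)/2 and Σ_{k=1}^n (k − (n+1)/2)²·p(k) = (n+1)(n−1)/(4(2n−1)), and moreover (n+1)(n−1)/(4(2n−1)) ≥ n/8 for every n ≥ 2. -/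
/-!
The weights `N(n,k)` are symmetric under `k ↦ n + 1 - k`, which forces the mean `(n + 1) / 2`
once Vandermonde's identity gives `∑ₖ N(n,k) = C_n`. For the variance, write
`(k - (n + 1) / 2)² = ((n + 1) / 2)² - k (n + 1 - k)`: the absorption identities
`k·C(n,k) = n·C(n-1,k-1) = (n + 1 - k)·C(n,k-1)` turn `k (n + 1 - k) N(n,k)` into
`n·C(n-1,k-1)²`, whose sum is the central binomial coefficient `n·C(2n-2,n-1)`.
-/

/-- The Narayana number `N(n,k) = (1/n)·C(n,k)·C(n,k−1)`, as a real number. -/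
noncomputable def narayana (n k : ℕ) : ℝ :=
  ((n.choose k : ℝ) * (n.choose (k - 1) : ℝ)) / (n : ℝ)

/-- The Catalan number `C_n = C(2n,n)/(n+1)`, as a real number. -/
noncomputable def catalanR (n : ℕ) : ℝ := ((2 * n).choose n : ℝ) / ((n : ℝ) + 1)

open Finset

theorem Finset.sum_Icc_one_reflect {M : Type*} [AddCommMonoid M] (f : ℕ → M) (n : ℕ) :
    ∑ k ∈ Icc 1 n, f (n + 1 - k) = ∑ k ∈ Icc 1 n, f k :=
  sum_nbij' (fun k ↦ n + 1 - k) (fun k ↦ n + 1 - k) (by simp; omega) (by simp; omega)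
    (by simp; omega) (by simp; omega) (by simp)

theorem Finset.sum_Icc_one_eq_sum_range {M : Type*} [AddCommMonoid M] (f : ℕ → M) (n : ℕ) :
    ∑ k ∈ Icc 1 n, f k = ∑ j ∈ range n, f (j + 1) := by
  rw [← Ico_add_one_right_eq_Icc, sum_Ico_eq_sum_range, add_tsub_cancel_right]
  simp only [add_comm]

theorem Nat.sum_Icc_choose_mul_choose_pred (n : ℕ) :
    ∑ k ∈ Icc 1 n, n.choose k * n.choose (k - 1) = (2 * n).choose (n + 1) := by
  calc ∑ k ∈ Icc 1 n, n.choose k * n.choose (k - 1)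
      = ∑ k ∈ Icc 1 n, n.choose k * n.choose (n + 1 - k) :=
        sum_congr rfl fun k hk ↦ by
          rw [mem_Icc] at hk
          rw [Nat.choose_symm_of_eq_add (by omega : n = (k - 1) + (n + 1 - k))]
    _ = ∑ k ∈ range (n + 2), n.choose k * n.choose (n + 1 - k) := by
        refine sum_subset (fun k hk ↦ by simp at hk ⊢; omega) fun k hk hk' ↦ ?_
        simp only [mem_range, mem_Icc, not_and_or] at hk hk'
        rcases hk' with h | h
        · obtain rfl : k = 0 := by omega
          simp
        · rw [Nat.choose_eq_zero_of_lt (by omega), zero_mul]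
    _ = (2 * n).choose (n + 1) := by
        rw [two_mul, Nat.add_choose_eq, Nat.sum_antidiagonal_eq_sum_range_succ
          (fun i j ↦ n.choose i * n.choose j)]

theorem Nat.mul_tsub_mul_choose_mul_choose_pred (m k : ℕ) (hk : k ∈ Icc 1 (m + 1)) :
    k * (m + 2 - k) * ((m + 1).choose k * (m + 1).choose (k - 1))
      = (m + 1) ^ 2 * m.choose (k - 1) ^ 2 := by
  obtain ⟨j, rfl⟩ : ∃ j, k = j + 1 := ⟨k - 1, by simp at hk; omega⟩
  have h₁ := Nat.add_one_mul_choose_eq m j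
  have h₂ := Nat.choose_mul_succ_eq m j
  rw [show m + 2 - (j + 1) = m + 1 - j by omega, add_tsub_cancel_right]
  calc (j + 1) * (m + 1 - j) * ((m + 1).choose (j + 1) * (m + 1).choose j)
      = ((m + 1).choose (j + 1) * (j + 1)) * ((m + 1).choose j * (m + 1 - j)) := by ring
    _ = (m + 1) ^ 2 * m.choose j ^ 2 := by rw [← h₁, ← h₂]; ring

theorem Nat.sum_Icc_mul_tsub_mul_choose_mul_choose_pred (m : ℕ) :
    ∑ k ∈ Icc 1 (m + 1), k * (m + 2 - k) * ((m + 1).choose k * (m + 1).choose (k - 1))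
      = (m + 1) ^ 2 * m.centralBinom := by
  rw [sum_congr rfl fun k hk ↦ Nat.mul_tsub_mul_choose_mul_choose_pred m k hk, ← mul_sum,
    sum_Icc_one_eq_sum_range, Nat.centralBinom, ← Nat.sum_range_choose_sq]
  simp

theorem catalanR_pos (n : ℕ) : 0 < catalanR n :=
  div_pos (by exact_mod_cast Nat.choose_pos (by omega)) (by positivity)

theorem narayana_reflect {n k : ℕ} (hk : k ∈ Icc 1 n) :
    narayana n (n + 1 - k) = narayana n k := by
  rw [mem_Icc] at hk
  rw [narayana, narayana, mul_comm, Nat.choose_symm_of_eq_add (by omega : n = (n + 1 - k - 1) + k),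
    Nat.choose_symm_of_eq_add (by omega : n = (k - 1) + (n + 1 - k))]

theorem sum_narayana_eq_catalanR {n : ℕ} (hn : 1 ≤ n) :
    ∑ k ∈ Icc 1 n, narayana n k = catalanR n := by
  have hchoose : ((2 * n).choose (n + 1) : ℝ) * (n + 1) = (2 * n).choose n * n := by
    have h := Nat.choose_succ_right_eq (2 * n) n
    rw [show 2 * n - n = n by omega] at h
    exact_mod_cast h
  have hsum : ∑ k ∈ Icc 1 n, (n.choose k : ℝ) * n.choose (k - 1) = (2 * n).choose (n + 1) :=
    mod_cast Nat.sum_Icc_choose_mul_choose_pred n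
  simp only [narayana, ← sum_div, hsum, catalanR]
  have : (n : ℝ) ≠ 0 := by positivity
  field_simp
  linarith [hchoose]

theorem sum_mul_narayana {n : ℕ} (hn : 1 ≤ n) :
    ∑ k ∈ Icc 1 n, (k : ℝ) * narayana n k = (n + 1) / 2 * catalanR n := by
  have hreflect : ∑ k ∈ Icc 1 n, ((n : ℝ) + 1 - k) * narayana n k
      = ∑ k ∈ Icc 1 n, (k : ℝ) * narayana n k := by
    rw [← sum_Icc_one_reflect (fun k ↦ (k : ℝ) * narayana n k)]
    refine sum_congr rfl fun k hk ↦ ?_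
    rw [narayana_reflect hk, Nat.cast_sub (by simp at hk; omega)]
    push_cast
    ring
  simp only [sub_mul, sum_sub_distrib, ← mul_sum, sum_narayana_eq_catalanR hn] at hreflect
  linarith

theorem catalanR_eq_centralBinom_div (n : ℕ) : catalanR n = (n.centralBinom : ℝ) / (n + 1) := by
  rw [catalanR, Nat.centralBinom_eq_two_mul_choose]

theorem sum_mul_sub_mul_narayana {n : ℕ} (hn : 1 ≤ n) :
    ∑ k ∈ Icc 1 n, (k : ℝ) * (n + 1 - k) * narayana n k
      = n ^ 2 * (n + 1) / (2 * (2 * n - 1)) * catalanR n := by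
  obtain ⟨m, rfl⟩ : ∃ m, n = m + 1 := ⟨n - 1, by omega⟩
  have hcentral : ((m + 1).centralBinom : ℝ) = 2 * (2 * m + 1) * m.centralBinom / (m + 1) := by
    rw [eq_div_iff (by positivity), mul_comm]
    exact_mod_cast Nat.succ_mul_centralBinom_succ m
  have hsum : ∑ k ∈ Icc 1 (m + 1),
      (k : ℝ) * (m + 1 + 1 - k) * (((m + 1).choose k : ℝ) * (m + 1).choose (k - 1))
      = (m + 1) ^ 2 * m.centralBinom := by
    have h := congrArg (Nat.cast : ℕ → ℝ) (Nat.sum_Icc_mul_tsub_mul_choose_mul_choose_pred m)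
    push_cast at h
    rw [← h]
    refine sum_congr rfl fun k hk ↦ ?_
    rw [Nat.cast_sub (by simp at hk; omega)]
    push_cast
    ring
  simp only [narayana, mul_div_assoc', ← sum_div]
  push_cast
  rw [hsum, catalanR_eq_centralBinom_div, hcentral]
  push_cast
  rw [show 2 * ((m : ℝ) + 1) - 1 = 2 * m + 1 by ring]
  field_simp

/-- The Narayana distribution `p(k) = N(n,k)/C_n` on `{1,…,n}` has mean
`(n+1)/2` and variance `(n+1)(n−1)/(4(2n−1))`, and the variance is at least
`n/8` for `n ≥ 2`. -/
theorem narayana_mean_variance (n : ℕ) (hn : 1 ≤ n) :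
    (∑ k ∈ Finset.Icc 1 n, (k : ℝ) * (narayana n k / catalanR n)) =
        ((n : ℝ) + 1) / 2 ∧
    (∑ k ∈ Finset.Icc 1 n,
        ((k : ℝ) - ((n : ℝ) + 1) / 2) ^ 2 * (narayana n k / catalanR n)) =
        ((n : ℝ) + 1) * ((n : ℝ) - 1) / (4 * (2 * (n : ℝ) - 1)) ∧
    (2 ≤ n →
      ((n : ℝ) + 1) * ((n : ℝ) - 1) / (4 * (2 * (n : ℝ) - 1)) ≥ (n : ℝ) / 8) := by
  have hC := (catalanR_pos n).ne'
  have hn' : (1 : ℝ) ≤ n := by exact_mod_cast hn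
  have hsq (k : ℕ) : ((k : ℝ) - (n + 1) / 2) ^ 2 * (narayana n k / catalanR n)
      = ((n + 1) / 2) ^ 2 * narayana n k / catalanR n
        - k * (n + 1 - k) * narayana n k / catalanR n := by
    ring
  refine ⟨?mean, ?variance, fun hn2 ↦ ?bound⟩
  case mean =>
    simp only [mul_div_assoc', ← sum_div, sum_mul_narayana hn]
    field_simp
  case variance =>
    simp only [hsq, sum_sub_distrib, ← sum_div, ← mul_sum, sum_narayana_eq_catalanR hn,
      sum_mul_sub_mul_narayana hn]
    have : 2 * (n : ℝ) - 1 ≠ 0 := by linarith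
    rw [mul_div_cancel_right₀ _ hC, mul_div_cancel_right₀ _ hC, div_pow,
      div_sub_div _ _ (by norm_num) (by positivity),
      div_eq_div_iff (by positivity) (by positivity)]
    ring
  case bound =>
    have hn2' : (2 : ℝ) ≤ n := by exact_mod_cast hn2
    rw [ge_iff_le, div_le_div_iff₀ (by norm_num) (by linarith)]
    nlinarith
end

section
/- Every lattice path family satisfies the matroid basis exchange axiom: for every lattice path family L = L[S_A, S_B] on ground set {1,…,m}, all S, T ∈ L, and every e ∈ S \ T, there exists f ∈ T \ S such that (S \ {e}) ∪ {f} ∈ L. In particular, L is the set of bases of a matroid (the lattice path matroid L[A,B]) on ground set {1,…,m}. -/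
open scoped Classical

/-!
Write `S_k` for the number of elements of `S` in `{1,…,k}`. Let `e ∈ S \ T`.
If `T_e < S_e`, then, since `T_m = S_m`, some element of `T \ S` lies above `e`; exchanging `e`
for the least such `f` lowers `S_k` by one exactly for `e ≤ k < f`, where no element of `T \ S`
has been counted yet, so `A_k ≤ T_k < S_k` there.
If `S_e ≤ T_e`, then `S_{e-1} < T_{e-1}`, and symmetrically the greatest `f ∈ T \ S` below `e`
raises `S_k` by one exactly for `f ≤ k < e`, where `S_k < T_k ≤ B_k`.
-/

open Finset

def prefixCount (X : Finset ℕ) (k : ℕ) : ℕ := #(X ∩ Icc 1 k)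

section PrefixCount

variable {S T : Finset ℕ}

lemma prefixCount_zero (X : Finset ℕ) : prefixCount X 0 = 0 := by
  simp [prefixCount]

lemma prefixCount_of_subset {X : Finset ℕ} {m : ℕ} (h : X ⊆ Icc 1 m) :
    prefixCount X m = #X := by
  rw [prefixCount, inter_eq_left.2 h]

lemma prefixCount_add_card_inter_Ioc (X : Finset ℕ) {j k : ℕ} (hjk : j ≤ k) :
    prefixCount X j + #(X ∩ Ioc j k) = prefixCount X k := by
  have hunion : Icc 1 j ∪ Ioc j k = Icc 1 k := by
    ext x; simp only [mem_union, mem_Icc, mem_Ioc]; omega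
  have hdisj : Disjoint (X ∩ Icc 1 j) (X ∩ Ioc j k) :=
    disjoint_left.2 fun x hx hx' => by
      simp only [mem_inter, mem_Icc, mem_Ioc] at hx hx'; omega
  rw [prefixCount, prefixCount, ← card_union_of_disjoint hdisj, ← inter_union_distrib_left,
    hunion]

lemma prefixCount_succ (X : Finset ℕ) (d : ℕ) :
    prefixCount X (d + 1) = prefixCount X d + if d + 1 ∈ X then 1 else 0 := by
  rw [← prefixCount_add_card_inter_Ioc X d.le_succ, Nat.Ioc_succ_singleton]
  split_ifs with h
  · rw [inter_singleton_of_mem h, card_singleton]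
  · rw [inter_singleton_of_notMem h, card_empty]

lemma prefixCount_add_le_of_forall_mem {j k : ℕ} (hjk : j ≤ k)
    (h : ∀ x ∈ T, j < x → x ≤ k → x ∈ S) :
    prefixCount T k + prefixCount S j ≤ prefixCount S k + prefixCount T j := by
  have hsub : T ∩ Ioc j k ⊆ S ∩ Ioc j k := fun x hx => by
    obtain ⟨hxT, hx⟩ := mem_inter.1 hx
    exact mem_inter.2 ⟨h x hxT (mem_Ioc.1 hx).1 (mem_Ioc.1 hx).2, hx⟩
  have := card_le_card hsub
  rw [← prefixCount_add_card_inter_Ioc T hjk, ← prefixCount_add_card_inter_Ioc S hjk]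
  omega

lemma exists_mem_sdiff_of_prefixCount_lt {j k : ℕ} (hjk : j ≤ k)
    (h : prefixCount S k + prefixCount T j < prefixCount T k + prefixCount S j) :
    ∃ x ∈ T \ S, j < x ∧ x ≤ k := by
  by_contra! hne
  have := prefixCount_add_le_of_forall_mem hjk fun x hxT hjx hxk =>
    not_not.1 fun hxS => (hne x (mem_sdiff.2 ⟨hxT, hxS⟩) hjx).not_ge hxk
  omega

end PrefixCount

lemma card_insert_erase_inter_add {α : Type*} [DecidableEq α] {S : Finset α} {e f : α}
    (I : Finset α) (he : e ∈ S) (hf : f ∉ S) :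
    #(insert f (S.erase e) ∩ I) + (if e ∈ I then 1 else 0)
      = #(S ∩ I) + (if f ∈ I then 1 else 0) := by
  have hf' : f ∉ (S ∩ I).erase e := fun h => hf (mem_inter.1 (mem_of_mem_erase h)).1
  by_cases heI : e ∈ I
  · have heSI : e ∈ S ∩ I := mem_inter.2 ⟨he, heI⟩
    have := card_pos.2 ⟨e, heSI⟩
    by_cases hfI : f ∈ I
    · rw [insert_inter_of_mem hfI, erase_inter, card_insert_of_notMem hf', card_erase_of_mem heSI]
      simp only [heI, hfI, if_true]; omega
    · rw [insert_inter_of_notMem hfI, erase_inter, card_erase_of_mem heSI]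
      simp only [heI, hfI, if_true, if_false]; omega
  · have heSI : e ∉ S ∩ I := fun h => heI (mem_inter.1 h).2
    by_cases hfI : f ∈ I
    · rw [insert_inter_of_mem hfI, erase_inter, card_insert_of_notMem hf', erase_eq_of_notMem heSI]
      simp only [heI, hfI, if_true, if_false]
    · rw [insert_inter_of_notMem hfI, erase_inter, erase_eq_of_notMem heSI]
      simp only [heI, hfI, if_false]

section LatticeFamily

variable {m r : ℕ} {A B S T : Finset ℕ} {e : ℕ}

lemma mem_latticeFamily :
    S ∈ latticeFamily m r A B ↔ S ⊆ Icc 1 m ∧ #S = r ∧ ∀ k ∈ Icc 1 m,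
      prefixCount A k ≤ prefixCount S k ∧ prefixCount S k ≤ prefixCount B k := by
  simp only [latticeFamily, mem_filter, mem_powerset, prefixCount]

lemma insert_erase_mem_latticeFamily {f : ℕ} (hS : S ∈ latticeFamily m r A B) (he : e ∈ S)
    (hf : f ∈ Icc 1 m) (hfS : f ∉ S)
    (hA : ∀ k, e ≤ k → k < f → prefixCount A k < prefixCount S k)
    (hB : ∀ k, f ≤ k → k < e → prefixCount S k < prefixCount B k) :
    insert f (S.erase e) ∈ latticeFamily m r A B := by
  obtain ⟨hSsub, hScard, hSbd⟩ := mem_latticeFamily.1 hS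
  have he1 : 1 ≤ e := (mem_Icc.1 (hSsub he)).1
  refine mem_latticeFamily.2 ⟨?_, ?_, fun k hk => ?_⟩
  · exact insert_subset hf ((erase_subset e S).trans hSsub)
  · rw [card_insert_of_notMem fun h => hfS (mem_of_mem_erase h), card_erase_of_mem he, hScard]
    have : 0 < r := hScard ▸ card_pos.2 ⟨e, he⟩
    omega
  · have hc := card_insert_erase_inter_add (Icc 1 k) he hfS
    simp only [mem_Icc, he1, (mem_Icc.1 hf).1, true_and] at hc
    rw [← prefixCount, ← prefixCount] at hc
    have := hSbd k hk
    by_cases hek : e ≤ k <;> by_cases hfk : f ≤ k <;>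
      simp only [hek, hfk, if_true, if_false] at hc
    · omega
    · have := hA k hek (by omega); omega
    · have := hB k hfk (by omega); omega
    · omega

lemma exists_exchange_of_prefixCount_lt (hS : S ∈ latticeFamily m r A B)
    (hT : T ∈ latticeFamily m r A B) (he : e ∈ S)
    (hlt : prefixCount T e < prefixCount S e) :
    ∃ f ∈ T \ S, insert f (S.erase e) ∈ latticeFamily m r A B := by
  obtain ⟨hSsub, hScard, -⟩ := mem_latticeFamily.1 hS
  obtain ⟨hTsub, hTcard, hTbd⟩ := mem_latticeFamily.1 hT
  obtain ⟨he1, hem⟩ := mem_Icc.1 (hSsub he)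
  set F := (T \ S).filter (e < ·)
  have hF : F.Nonempty := by
    obtain ⟨x, hx, hex, -⟩ := exists_mem_sdiff_of_prefixCount_lt (S := S) (T := T) hem (by
      rw [prefixCount_of_subset hSsub, prefixCount_of_subset hTsub, hScard, hTcard]; omega)
    exact ⟨x, mem_filter.2 ⟨hx, hex⟩⟩
  obtain ⟨hfTS, hef⟩ := mem_filter.1 (F.min'_mem hF)
  obtain ⟨hfT, hfS⟩ := mem_sdiff.1 hfTS
  refine ⟨F.min' hF, hfTS, insert_erase_mem_latticeFamily hS he (hTsub hfT) hfS
    (fun k hek hkf => ?_) (fun k hfk hke => by omega)⟩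
  have hfm := (mem_Icc.1 (hTsub hfT)).2
  have hk : k ∈ Icc 1 m := mem_Icc.2 ⟨by omega, by omega⟩
  have := prefixCount_add_le_of_forall_mem (S := S) (T := T) hek fun x hxT hex hxk =>
    not_not.1 fun hxS => (F.min'_le x (mem_filter.2 ⟨mem_sdiff.2 ⟨hxT, hxS⟩, hex⟩)).not_gt
      (by omega)
  have := (hTbd k hk).1
  omega

lemma exists_exchange_of_prefixCount_le (hS : S ∈ latticeFamily m r A B)
    (hT : T ∈ latticeFamily m r A B) (he : e ∈ S \ T)
    (hle : prefixCount S e ≤ prefixCount T e) :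
    ∃ f ∈ T \ S, insert f (S.erase e) ∈ latticeFamily m r A B := by
  obtain ⟨hSsub, -, -⟩ := mem_latticeFamily.1 hS
  obtain ⟨hTsub, -, hTbd⟩ := mem_latticeFamily.1 hT
  obtain ⟨heS, heT⟩ := mem_sdiff.1 he
  obtain ⟨d, rfl⟩ : ∃ d, e = d + 1 := ⟨e - 1, by have := (mem_Icc.1 (hSsub heS)).1; omega⟩
  have hd : prefixCount S d < prefixCount T d := by
    rw [prefixCount_succ, prefixCount_succ, if_pos heS, if_neg heT] at hle; omega
  set F := (T \ S).filter (· ≤ d)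
  have hF : F.Nonempty := by
    obtain ⟨x, hx, -, hxd⟩ := exists_mem_sdiff_of_prefixCount_lt (S := S) (T := T) d.zero_le (by
      rw [prefixCount_zero, prefixCount_zero]; omega)
    exact ⟨x, mem_filter.2 ⟨hx, hxd⟩⟩
  obtain ⟨hfTS, hfd⟩ := mem_filter.1 (F.max'_mem hF)
  obtain ⟨hfT, hfS⟩ := mem_sdiff.1 hfTS
  refine ⟨F.max' hF, hfTS, insert_erase_mem_latticeFamily hS heS (hTsub hfT) hfS
    (fun k hek hkf => by omega) (fun k hfk hke => ?_)⟩
  have hf1 := (mem_Icc.1 (hTsub hfT)).1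
  have hem := (mem_Icc.1 (hSsub heS)).2
  have hk : k ∈ Icc 1 m := mem_Icc.2 ⟨by omega, by omega⟩
  have := prefixCount_add_le_of_forall_mem (S := S) (T := T) (show k ≤ d by omega)
    fun x hxT hkx hxd => not_not.1 fun hxS =>
      (F.le_max' x (mem_filter.2 ⟨mem_sdiff.2 ⟨hxT, hxS⟩, hxd⟩)).not_gt (by omega)
  have := (hTbd k hk).2
  omega

end LatticeFamily

theorem latticeFamily_exchange_general
    (m r : ℕ)
    (A B : Finset ℕ)
    (S T : Finset ℕ) (hS : S ∈ latticeFamily m r A B) (hT : T ∈ latticeFamily m r A B)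
    (e : ℕ) (he : e ∈ S \ T) :
    ∃ f ∈ T \ S, insert f (S.erase e) ∈ latticeFamily m r A B := by
  rcases lt_or_ge (prefixCount T e) (prefixCount S e) with hlt | hle
  · exact exists_exchange_of_prefixCount_lt hS hT (mem_sdiff.1 he).1 hlt
  · exact exists_exchange_of_prefixCount_le hS hT he hle

/-- Lattice path families satisfy the matroid basis exchange axiom: for
`S, T ∈ L[A,B]` and `e ∈ S \ T` there is `f ∈ T \ S` with `S \ {e} ∪ {f} ∈ L[A,B]`. -/
theorem latticeFamily_exchange
    (m r : ℕ) (hm : 1 ≤ m) (hr : r ≤ m)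
    (A B : Finset ℕ) (hA : A ⊆ Finset.Icc 1 m) (hB : B ⊆ Finset.Icc 1 m)
    (hAcard : A.card = r) (hBcard : B.card = r)
    (hAB : ∀ k ∈ Finset.Icc 1 m,
      (A ∩ Finset.Icc 1 k).card ≤ (B ∩ Finset.Icc 1 k).card)
    (S T : Finset ℕ) (hS : S ∈ latticeFamily m r A B) (hT : T ∈ latticeFamily m r A B)
    (e : ℕ) (he : e ∈ S \ T) :
    ∃ f ∈ T \ S, insert f (S.erase e) ∈ latticeFamily m r A B :=
  latticeFamily_exchange_general m r A B S T hS hT e he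
end
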